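/- arXiv:2510.23670 — 6 statements merged into one kernel-verified Lean document; each statement's English description precedes it below -/
import Mathlib

section
/- Let G be a finite simple graph and v a vertex of G. Then σ_1(G) = σ_1(G − v) + σ_1(G − N[v]) + Σ_{u ∈ N(v)} σ_0( G − (N(v) ∪ N(u)) ). -/
open scoped Classical
open Finset

noncomputable section

/-- The number of edges of `G` whose endpoints both lie in `S`. -/
def edgesIn {V : Type*} [Fintype V] (G : SimpleGraph V) (S : Finset V) : ℕ :=
  (G.edgeFinset.filter fun e => ∀ v ∈ e, v ∈ S).card

/-- The finset of `l`-nearly independent vertex sets of `G`: those vertex subsets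
inducing exactly `l` edges. -/
def nearlyIndep {V : Type*} [Fintype V] (G : SimpleGraph V) (l : ℕ) : Finset (Finset V) :=
  Finset.univ.filter fun S => edgesIn G S = l

/-- `σ_l(G)`: the number of `l`-nearly independent vertex sets of `G`. -/
def sigmaNI {V : Type*} [Fintype V] (G : SimpleGraph V) (l : ℕ) : ℕ :=
  (nearlyIndep G l).card

/-- `σ_l(G, k)`: the number of `l`-nearly independent vertex sets of `G` of cardinality `k`. -/
def sigmaNIk {V : Type*} [Fintype V] (G : SimpleGraph V) (l k : ℕ) : ℕ :=
  ((nearlyIndep G l).filter fun S => S.card = k).card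

/-- `S_l(G)`: the sum of the cardinalities of the `l`-nearly independent vertex sets of `G`. -/
def sumNI {V : Type*} [Fintype V] (G : SimpleGraph V) (l : ℕ) : ℕ :=
  ∑ S ∈ nearlyIndep G l, S.card

/-- `av_l(G)`: the average size of an `l`-nearly independent vertex set of `G`
(`0` if there are none). -/
def avNI {V : Type*} [Fintype V] (G : SimpleGraph V) (l : ℕ) : ℚ :=
  if sigmaNI G l = 0 then 0 else (sumNI G l : ℚ) / (sigmaNI G l : ℚ)

/-- `G − A`: the subgraph of `G` induced by the vertices not in `A`. -/
def deleteVerts {V : Type*} (G : SimpleGraph V) (A : Set V) : SimpleGraph ↥(Aᶜ) :=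
  G.induce Aᶜ

/-- For an edge `e = uv`, the set `N(u) ∪ N(v)`. -/
def nbhdUnion {V : Type*} (G : SimpleGraph V) : Sym2 V → Set V :=
  Sym2.lift ⟨fun u v => G.neighborSet u ∪ G.neighborSet v, fun u v => Set.union_comm _ _⟩

/-!
Sort the sets `S` with exactly one induced edge by how they meet `v`. If `v ∉ S`, `S` lives in
`G − v`. If `v ∈ S`, every neighbour of `v` in `S` contributes an edge, so `S` contains at most one
of them. With none, `S − v` is a set of `G − N[v]` with one edge; with exactly one, `u`, the edge
`uv` is the only edge of `S`, so `S − {u, v}` is an independent set avoiding `N(u) ∪ N(v)`.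
-/

namespace SimpleGraph

variable {V : Type*} [Fintype V] (G : SimpleGraph V)

lemma mem_nearlyIndep {l : ℕ} {S : Finset V} : S ∈ nearlyIndep G l ↔ edgesIn G S = l := by
  simp [nearlyIndep]

lemma edgesIn_eq_card_filter_sym2 (S : Finset V) :
    edgesIn G S = #{e ∈ S.sym2 | e ∈ G.edgeSet} := by
  rw [edgesIn]
  congr 1
  ext e
  simp [and_comm]

lemma edgesIn_insert {v : V} {T : Finset V} (hv : v ∉ T) :
    edgesIn G (insert v T) = edgesIn G T + #{u ∈ T | G.Adj v u} := by
  rw [edgesIn_eq_card_filter_sym2, edgesIn_eq_card_filter_sym2, ← Finset.cons_eq_insert _ _ hv,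
    Finset.sym2_cons, Finset.filter_disjUnion, Finset.card_disjUnion, add_comm, Finset.filter_map,
    Finset.card_map, Finset.filter_cons_of_neg _ _ _ _ (by simp)]
  rfl

lemma edgesIn_induce (s : Set V) [Fintype s] (T : Finset s) :
    edgesIn (G.induce s) T = edgesIn G (T.map (Function.Embedding.subtype _)) := by
  rw [edgesIn_eq_card_filter_sym2, edgesIn_eq_card_filter_sym2, Finset.sym2_map,
    Finset.filter_map, Finset.card_map]
  congr 1
  refine Finset.filter_congr fun e _ => ?_
  induction e using Sym2.ind
  simp

lemma sigmaNI_deleteVerts (A : Set V) [Fintype ↥Aᶜ] (l : ℕ) :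
    sigmaNI (deleteVerts G A) l = #{S ∈ nearlyIndep G l | Disjoint (↑S) A} := by
  have edgesIn_deleteVerts (T : Finset ↥Aᶜ) :
      edgesIn (deleteVerts G A) T = edgesIn G (T.map (Function.Embedding.subtype _)) :=
    edgesIn_induce G Aᶜ T
  have map_subtype {S : Finset V} (hS : Disjoint (↑S) A) :
      (S.subtype (· ∈ Aᶜ)).map (Function.Embedding.subtype _) = S :=
    Finset.subtype_map_of_mem fun _ hx => Set.disjoint_left.mp hS hx
  refine Finset.card_nbij' (fun T : Finset ↥Aᶜ => T.map (Function.Embedding.subtype _))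
    (fun S : Finset V => S.subtype (· ∈ Aᶜ)) (fun T hT => ?_) (fun S hS => ?_)
    (fun T _ => by ext x; exact Finset.mem_subtype.trans (Finset.mem_map' _))
    (fun S hS => ?_) <;>
    simp only [Finset.mem_coe, Finset.mem_filter, mem_nearlyIndep] at *
  · exact ⟨edgesIn_deleteVerts T ▸ hT,
      Set.subset_compl_iff_disjoint_right.mp (Finset.map_subtype_subset T)⟩
  · rw [edgesIn_deleteVerts, map_subtype hS.2, hS.1]
  · exact map_subtype hS.2

omit [Fintype V] in
lemma disjoint_neighborSet_iff {v : V} {T : Finset V} :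
    Disjoint (↑T) (G.neighborSet v) ↔ ∀ u ∈ T, ¬G.Adj v u := by
  simp [Set.disjoint_left]

lemma edgesIn_insert_of_forall_not_adj {v : V} {T : Finset V} (hv : v ∉ T)
    (h : ∀ u ∈ T, ¬G.Adj v u) : edgesIn G (insert v T) = edgesIn G T := by
  rw [edgesIn_insert G hv, Finset.card_filter_eq_zero_iff.mpr h, add_zero]

lemma card_filter_adj_le_edgesIn {v : V} {S : Finset V} (hv : v ∈ S) :
    #{u ∈ S | G.Adj v u} ≤ edgesIn G S := by
  have h := edgesIn_insert G (Finset.notMem_erase v S)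
  rw [Finset.insert_erase hv] at h
  rw [h, Finset.filter_erase,
    Finset.erase_eq_of_notMem fun h => G.irrefl (Finset.mem_filter.mp h).2]
  exact Nat.le_add_left _ _

lemma edgesIn_insert_insert_eq_one_iff {u v : V} {R : Finset V} (huv : G.Adj v u)
    (hv : v ∉ R) (hu : u ∉ R) :
    edgesIn G (insert v (insert u R)) = 1 ↔
      edgesIn G R = 0 ∧ Disjoint (↑R) (G.neighborSet v ∪ G.neighborSet u) := by
  have hvuR : v ∉ insert u R := Finset.mem_insert.not.mpr (not_or.mpr ⟨huv.ne, hv⟩)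
  rw [edgesIn_insert G hvuR, edgesIn_insert G hu, Finset.filter_insert, if_pos huv,
    Finset.card_insert_of_notMem (fun h => hu (Finset.mem_filter.mp h).1),
    Set.disjoint_union_right, disjoint_neighborSet_iff, disjoint_neighborSet_iff]
  have hsum {e a b : ℕ} : e + a + (b + 1) = 1 ↔ e = 0 ∧ b = 0 ∧ a = 0 := by omega
  rw [hsum, Finset.card_filter_eq_zero_iff, Finset.card_filter_eq_zero_iff]

lemma sigmaNI_deleteVerts_singleton (v : V) (l : ℕ) :
    sigmaNI (deleteVerts G {v}) l = #{S ∈ nearlyIndep G l | v ∉ S} := by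
  simp_rw [sigmaNI_deleteVerts, Set.disjoint_singleton_right, Finset.mem_coe]

lemma sigmaNI_deleteVerts_insert_neighborSet (v : V) (l : ℕ) :
    sigmaNI (deleteVerts G (insert v (G.neighborSet v))) l =
      #{S ∈ nearlyIndep G l | v ∈ S ∧ ∀ u ∈ S, ¬G.Adj v u} := by
  rw [sigmaNI_deleteVerts]
  refine Finset.card_nbij' (insert v) (fun S => S.erase v) (fun T hT => ?_) (fun S hS => ?_)
    (fun T hT => ?_) (fun S hS => ?_) <;>
    simp only [Finset.mem_coe, Finset.mem_filter, mem_nearlyIndep, Set.disjoint_insert_right,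
      disjoint_neighborSet_iff] at *
  · obtain ⟨hl, hvT, hT⟩ := hT
    refine ⟨edgesIn_insert_of_forall_not_adj G hvT hT ▸ hl, Finset.mem_insert_self v T, ?_⟩
    rintro u hu
    rcases Finset.mem_insert.mp hu with rfl | hu
    exacts [G.irrefl, hT u hu]
  · obtain ⟨hl, hv, hS⟩ := hS
    have hS' : ∀ u ∈ S.erase v, ¬G.Adj v u := fun u hu => hS u (Finset.mem_of_mem_erase hu)
    refine ⟨?_, Finset.notMem_erase v S, hS'⟩
    rwa [← edgesIn_insert_of_forall_not_adj G (Finset.notMem_erase v S) hS',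
      Finset.insert_erase hv]
  · exact Finset.erase_insert hT.2.1
  · exact Finset.insert_erase hS.2.1

lemma sigmaNI_deleteVerts_neighborSet_union {u v : V} (huv : G.Adj v u) :
    sigmaNI (deleteVerts G (G.neighborSet v ∪ G.neighborSet u)) 0 =
      #{S ∈ nearlyIndep G 1 | v ∈ S ∧ u ∈ S} := by
  rw [sigmaNI_deleteVerts]
  have avoid {R : Finset V} (hR : Disjoint (↑R) (G.neighborSet v ∪ G.neighborSet u)) :
      v ∉ R ∧ u ∉ R :=
    ⟨fun h => Set.disjoint_left.mp hR h (Or.inr huv.symm),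
      fun h => Set.disjoint_left.mp hR h (Or.inl huv)⟩
  have reassemble {S : Finset V} (hv : v ∈ S) (hu : u ∈ S) :
      insert v (insert u ((S.erase v).erase u)) = S := by
    rw [Finset.insert_erase (Finset.mem_erase.mpr ⟨huv.ne', hu⟩), Finset.insert_erase hv]
  refine Finset.card_nbij' (fun R => insert v (insert u R)) (fun S => (S.erase v).erase u)
    (fun R hR => ?_) (fun S hS => ?_) (fun R hR => ?_) (fun S hS => ?_) <;>
    simp only [Finset.mem_coe, Finset.mem_filter, mem_nearlyIndep] at *
  · obtain ⟨hvR, huR⟩ := avoid hR.2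
    exact ⟨(edgesIn_insert_insert_eq_one_iff G huv hvR huR).mpr hR, Finset.mem_insert_self v _,
      Finset.mem_insert_of_mem (Finset.mem_insert_self u R)⟩
  · obtain ⟨h1, hv, hu⟩ := hS
    have hvR : v ∉ (S.erase v).erase u :=
      fun h => Finset.notMem_erase v S (Finset.mem_of_mem_erase h)
    exact (edgesIn_insert_insert_eq_one_iff G huv hvR (Finset.notMem_erase u _)).mp
      (by rwa [reassemble hv hu])
  · obtain ⟨hvR, huR⟩ := avoid hR.2
    rw [Finset.erase_insert (Finset.mem_insert.not.mpr (not_or.mpr ⟨huv.ne, hvR⟩)),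
      Finset.erase_insert huR]
  · exact reassemble hS.2.1 hS.2.2

lemma card_nearlyIndep_one_mem (v : V) :
    #{S ∈ nearlyIndep G 1 | v ∈ S} =
      #{S ∈ nearlyIndep G 1 | v ∈ S ∧ ∀ u ∈ S, ¬G.Adj v u} +
        ∑ u ∈ (G.neighborSet v).toFinset, #{S ∈ nearlyIndep G 1 | v ∈ S ∧ u ∈ S} := by
  have hunion : {S ∈ nearlyIndep G 1 | v ∈ S ∧ ¬∀ u ∈ S, ¬G.Adj v u} =
      (G.neighborSet v).toFinset.biUnion fun u => {S ∈ nearlyIndep G 1 | v ∈ S ∧ u ∈ S} := by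
    ext S
    simp only [Finset.mem_filter, Finset.mem_biUnion, Set.mem_toFinset, mem_neighborSet,
      not_forall, not_not, exists_prop]
    constructor
    · rintro ⟨hS, hv, u, hu, huv⟩
      exact ⟨u, huv, hS, hv, hu⟩
    · rintro ⟨u, huv, hS, hv, hu⟩
      exact ⟨hS, hv, u, hu, huv⟩
  rw [← Finset.card_filter_add_card_filter_not (p := fun S => ∀ u ∈ S, ¬G.Adj v u),
    Finset.filter_filter, Finset.filter_filter, hunion, Finset.card_biUnion]
  intro u₁ hu₁ u₂ hu₂ hne
  refine Finset.disjoint_left.mpr fun S hS₁ hS₂ => hne ?_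
  simp only [Finset.mem_filter, mem_nearlyIndep] at hS₁ hS₂
  obtain ⟨h1, hv, hu₁S⟩ := hS₁
  have hle := card_filter_adj_le_edgesIn G hv
  rw [h1] at hle
  exact Finset.card_le_one.mp hle u₁ (Finset.mem_filter.mpr ⟨hu₁S, Set.mem_toFinset.mp hu₁⟩)
    u₂ (Finset.mem_filter.mpr ⟨hS₂.2.2, Set.mem_toFinset.mp hu₂⟩)

end SimpleGraph

/-- Recursion for σ₁ at a vertex `v`. -/
theorem stmt2 {V : Type*} [Fintype V] (G : SimpleGraph V) (v : V) :
    sigmaNI G 1 =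
      sigmaNI (deleteVerts G {v}) 1 +
        sigmaNI (deleteVerts G (insert v (G.neighborSet v))) 1 +
        ∑ u ∈ (G.neighborSet v).toFinset,
          sigmaNI (deleteVerts G (G.neighborSet v ∪ G.neighborSet u)) 0 := by
  rw [G.sigmaNI_deleteVerts_singleton, G.sigmaNI_deleteVerts_insert_neighborSet,
    Finset.sum_congr rfl fun u hu => G.sigmaNI_deleteVerts_neighborSet_union
      ((G.mem_neighborSet v u).mp (Set.mem_toFinset.mp hu)),
    add_assoc, ← G.card_nearlyIndep_one_mem, add_comm, Finset.card_filter_add_card_filter_not]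
  rfl
end
end

section
/- For every finite simple graph G = (V, E) and every k ≥ 0, σ_1(G, k) = Σ_{uv ∈ E} σ_0( G − (N(v) ∪ N(u)), k − 2 ). Consequently σ_1(G) = Σ_{uv ∈ E} σ_0( G − (N(v) ∪ N(u)) ) and S_1(G) = Σ_{uv ∈ E} [ 2·σ_0( G − (N(v) ∪ N(u)) ) + S_0( G − (N(v) ∪ N(u)) ) ]. -/
open scoped Classical
open Finset

noncomputable section

/-- The number of `l`-nearly independent vertex sets of `G` whose cardinality equals the
integer `k` (so `0` whenever `k < 0`). -/
def sigmaNIkZ {V : Type*} [Fintype V] (G : SimpleGraph V) (l : ℕ) (k : ℤ) : ℕ :=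
  ((nearlyIndep G l).filter fun S => (S.card : ℤ) = k).card

/-! A 1-nearly independent set `S` contains exactly one edge `uv`, so grouping the sets by that
edge splits the count over the edges of `G`. For a fixed edge `uv`, the set `S` meets
`N(u) ∪ N(v)` only in `u` and `v`, and `S ↦ S \ {u, v}` is a bijection onto the independent
sets of `G − (N(u) ∪ N(v))`, lowering the cardinality by `2`. Hence
`∑_S f |S| = ∑_{uv ∈ E} ∑_T f (|T| + 2)` for every weight `f`; the three identities are the
weights `[· = k]`, `1` and `id`. -/

lemma mk_mem_filter_edgeFinset {V : Type*} [Fintype V] (G : SimpleGraph V) (S : Finset V)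
    (a b : V) :
    s(a, b) ∈ G.edgeFinset.filter (fun e => ∀ x ∈ e, x ∈ S) ↔
      G.Adj a b ∧ a ∈ S ∧ b ∈ S := by
  simp

lemma edgesIn_eq_zero_iff {V : Type*} [Fintype V] (G : SimpleGraph V) (S : Finset V) :
    edgesIn G S = 0 ↔ ∀ a ∈ S, ∀ b ∈ S, ¬ G.Adj a b := by
  rw [edgesIn, card_eq_zero, eq_empty_iff_forall_notMem, Sym2.forall]
  simp only [mk_mem_filter_edgeFinset]
  grind

lemma edgesIn_eq_one_iff {V : Type*} [Fintype V] (G : SimpleGraph V) {u v : V}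
    (h : G.Adj u v) {S : Finset V} (hu : u ∈ S) (hv : v ∈ S) :
    edgesIn G S = 1 ↔ ∀ a ∈ S, ∀ b ∈ S, G.Adj a b → s(a, b) = s(u, v) := by
  have huv : s(u, v) ∈ G.edgeFinset.filter (fun e => ∀ x ∈ e, x ∈ S) :=
    (mk_mem_filter_edgeFinset G S u v).2 ⟨h, hu, hv⟩
  rw [edgesIn, card_eq_one_iff_existsUnique]
  constructor
  · intro h1 a ha b hb hab
    exact h1.unique ((mk_mem_filter_edgeFinset G S a b).2 ⟨hab, ha, hb⟩) huv
  · intro h1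
    refine ⟨s(u, v), huv, Sym2.ind fun a b hab => ?_⟩
    obtain ⟨hab, ha, hb⟩ := (mk_mem_filter_edgeFinset G S a b).1 hab
    exact h1 a ha b hb hab

section InsertPair

variable {V : Type*} {A : Set V} {u v : V}

def insertPair (u v : V) (T : Finset ↥Aᶜ) : Finset V :=
  insert u (insert v (T.map (Function.Embedding.subtype _)))

lemma mem_insertPair {T : Finset ↥Aᶜ} {x : V} :
    x ∈ insertPair u v T ↔ x = u ∨ x = v ∨ ∃ hx : x ∉ A, ⟨x, hx⟩ ∈ T := by
  simp [insertPair]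

lemma card_insertPair (huv : u ≠ v) (hu : u ∈ A) (hv : v ∈ A) (T : Finset ↥Aᶜ) :
    (insertPair u v T).card = T.card + 2 := by
  rw [insertPair, card_insert_of_notMem, card_insert_of_notMem, card_map]
  · simp [hv]
  · simp [huv, hu]

lemma subtype_insertPair (hu : u ∈ A) (hv : v ∈ A) (T : Finset ↥Aᶜ) :
    (insertPair u v T).subtype (· ∈ Aᶜ) = T := by
  ext ⟨x, hx⟩
  simp only [mem_subtype, mem_insertPair]
  constructor
  · rintro (rfl | rfl | ⟨_, hxT⟩)
    exacts [absurd hu hx, absurd hv hx, hxT]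
  · exact fun hxT => Or.inr (Or.inr ⟨hx, hxT⟩)

end InsertPair

lemma mem_nearlyIndep {V : Type*} [Fintype V] {G : SimpleGraph V} {l : ℕ} {S : Finset V} :
    S ∈ nearlyIndep G l ↔ edgesIn G S = l := by
  simp [nearlyIndep]

section Edge

variable {V : Type*} {G : SimpleGraph V} {u v : V}

lemma left_mem_nbhdUnion (h : G.Adj u v) : u ∈ nbhdUnion G s(u, v) := Or.inr h.symm

lemma right_mem_nbhdUnion (h : G.Adj u v) : v ∈ nbhdUnion G s(u, v) := Or.inl h

variable [Fintype V]

lemma eq_or_eq_of_mem_nbhdUnion (h : G.Adj u v) {S : Finset V} (hS : edgesIn G S = 1)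
    (hu : u ∈ S) (hv : v ∈ S) {x : V} (hx : x ∈ S) (hxA : x ∈ nbhdUnion G s(u, v)) :
    x = u ∨ x = v := by
  rw [edgesIn_eq_one_iff G h hu hv] at hS
  rcases hxA with hux | hvx
  · exact Sym2.mem_iff.1 (hS u hu x hx hux ▸ Sym2.mem_mk_right u x)
  · exact Sym2.mem_iff.1 (hS v hv x hx hvx ▸ Sym2.mem_mk_right v x)

lemma edgesIn_subtype_compl_nbhdUnion (h : G.Adj u v) {S : Finset V} (hS : edgesIn G S = 1)
    (hu : u ∈ S) (hv : v ∈ S) :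
    edgesIn (deleteVerts G (nbhdUnion G s(u, v)))
      (S.subtype (· ∈ (nbhdUnion G s(u, v))ᶜ)) = 0 := by
  rw [edgesIn_eq_zero_iff]
  rintro ⟨a, ha⟩ haS ⟨b, _⟩ hbS hab
  rw [mem_subtype] at haS hbS
  have ha_uv : a ∈ s(u, v) :=
    (edgesIn_eq_one_iff G h hu hv).1 hS a haS b hbS hab ▸ Sym2.mem_mk_left a b
  rcases Sym2.mem_iff.1 ha_uv with rfl | rfl
  exacts [ha (left_mem_nbhdUnion h), ha (right_mem_nbhdUnion h)]

lemma insertPair_subtype_compl_nbhdUnion (h : G.Adj u v) {S : Finset V} (hS : edgesIn G S = 1)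
    (hu : u ∈ S) (hv : v ∈ S) :
    insertPair u v (S.subtype (· ∈ (nbhdUnion G s(u, v))ᶜ)) = S := by
  ext x
  rw [mem_insertPair]
  constructor
  · rintro (rfl | rfl | ⟨_, hxS⟩)
    exacts [hu, hv, mem_subtype.1 hxS]
  · intro hx
    by_cases hxA : x ∈ nbhdUnion G s(u, v)
    · exact (eq_or_eq_of_mem_nbhdUnion h hS hu hv hx hxA).imp_right Or.inl
    · exact Or.inr (Or.inr ⟨hxA, mem_subtype.2 hx⟩)

lemma edgesIn_insertPair (h : G.Adj u v) {T : Finset ↥(nbhdUnion G s(u, v))ᶜ}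
    (hT : edgesIn (deleteVerts G (nbhdUnion G s(u, v))) T = 0) :
    edgesIn G (insertPair u v T) = 1 := by
  have hu : u ∈ insertPair u v T := mem_insertPair.2 (Or.inl rfl)
  have hv : v ∈ insertPair u v T := mem_insertPair.2 (Or.inr (Or.inl rfl))
  rw [edgesIn_eq_one_iff G h hu hv]
  rw [edgesIn_eq_zero_iff] at hT
  intro a ha b hb hab
  rw [mem_insertPair] at ha hb
  have not_adj (x : V) (hx : x ∉ nbhdUnion G s(u, v)) : ¬ G.Adj u x ∧ ¬ G.Adj v x :=
    not_or.1 hx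
  rcases ha with rfl | rfl | ⟨ha, haT⟩ <;> rcases hb with rfl | rfl | ⟨hb, hbT⟩
  · exact absurd hab G.irrefl
  · rfl
  · exact absurd hab (not_adj b hb).1
  · exact Sym2.eq_swap
  · exact absurd hab G.irrefl
  · exact absurd hab (not_adj b hb).2
  · exact absurd hab.symm (not_adj a ha).1
  · exact absurd hab.symm (not_adj a ha).2
  · exact absurd hab (hT _ haT _ hbT)

lemma sum_nearlyIndep_one_of_adj {M : Type*} [AddCommMonoid M] (h : G.Adj u v) (f : ℕ → M) :
    ∑ S ∈ (nearlyIndep G 1).filter (fun S => ∀ x ∈ s(u, v), x ∈ S), f S.card =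
      ∑ T ∈ nearlyIndep (deleteVerts G (nbhdUnion G s(u, v))) 0, f (T.card + 2) := by
  have mem_filter_iff (S : Finset V) :
      S ∈ (nearlyIndep G 1).filter (fun S => ∀ x ∈ s(u, v), x ∈ S) ↔
        edgesIn G S = 1 ∧ u ∈ S ∧ v ∈ S := by
    simp [mem_nearlyIndep]
  have hu := left_mem_nbhdUnion h
  have hv := right_mem_nbhdUnion h
  refine sum_nbij' (fun S => S.subtype (· ∈ (nbhdUnion G s(u, v))ᶜ)) (insertPair u v)
    (fun S hS => ?_) (fun T hT => ?_) (fun S hS => ?_) (fun T _ => subtype_insertPair hu hv T)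
    (fun S hS => ?_)
  · obtain ⟨h1, huS, hvS⟩ := (mem_filter_iff S).1 hS
    exact mem_nearlyIndep.2 (edgesIn_subtype_compl_nbhdUnion h h1 huS hvS)
  · exact (mem_filter_iff _).2 ⟨edgesIn_insertPair h (mem_nearlyIndep.1 hT),
      mem_insertPair.2 (Or.inl rfl), mem_insertPair.2 (Or.inr (Or.inl rfl))⟩
  · obtain ⟨h1, huS, hvS⟩ := (mem_filter_iff S).1 hS
    exact insertPair_subtype_compl_nbhdUnion h h1 huS hvS
  · obtain ⟨h1, huS, hvS⟩ := (mem_filter_iff S).1 hS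
    rw [← card_insertPair h.ne hu hv, insertPair_subtype_compl_nbhdUnion h h1 huS hvS]

end Edge

lemma sum_nearlyIndep_one_eq_sum_edgeFinset {V : Type*} [Fintype V] (G : SimpleGraph V)
    {M : Type*} [AddCommMonoid M] (w : Finset V → M) :
    ∑ S ∈ nearlyIndep G 1, w S =
      ∑ e ∈ G.edgeFinset,
        ∑ S ∈ (nearlyIndep G 1).filter (fun S => ∀ x ∈ e, x ∈ S), w S := by
  simp only [sum_filter]
  rw [sum_comm]
  refine sum_congr rfl fun S hS => ?_
  rw [← sum_filter, sum_const, ← edgesIn, mem_nearlyIndep.1 hS, one_smul]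

theorem sum_nearlyIndep_one {V : Type*} [Fintype V] (G : SimpleGraph V)
    {M : Type*} [AddCommMonoid M] (f : ℕ → M) :
    ∑ S ∈ nearlyIndep G 1, f S.card =
      ∑ e ∈ G.edgeFinset,
        ∑ T ∈ nearlyIndep (deleteVerts G (nbhdUnion G e)) 0, f (T.card + 2) := by
  rw [sum_nearlyIndep_one_eq_sum_edgeFinset]
  refine sum_congr rfl fun e he => ?_
  induction e using Sym2.ind with
  | _ u v => exact sum_nearlyIndep_one_of_adj (G.mem_edgeFinset.1 he) f

theorem sigmaNIk_one {V : Type*} [Fintype V] (G : SimpleGraph V) (k : ℕ) :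
    sigmaNIk G 1 k =
      ∑ e ∈ G.edgeFinset, sigmaNIkZ (deleteVerts G (nbhdUnion G e)) 0 ((k : ℤ) - 2) := by
  simp only [sigmaNIk, sigmaNIkZ, card_filter]
  rw [sum_nearlyIndep_one G fun n => if n = k then 1 else 0]
  refine sum_congr rfl fun e _ => sum_congr rfl fun T _ => ?_
  simp only [show T.card + 2 = k ↔ (T.card : ℤ) = k - 2 by omega]

theorem sigmaNI_one {V : Type*} [Fintype V] (G : SimpleGraph V) :
    sigmaNI G 1 = ∑ e ∈ G.edgeFinset, sigmaNI (deleteVerts G (nbhdUnion G e)) 0 := by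
  simp only [sigmaNI, card_eq_sum_ones]
  exact sum_nearlyIndep_one G fun _ => 1

theorem sumNI_one {V : Type*} [Fintype V] (G : SimpleGraph V) :
    sumNI G 1 = ∑ e ∈ G.edgeFinset,
      (2 * sigmaNI (deleteVerts G (nbhdUnion G e)) 0 +
        sumNI (deleteVerts G (nbhdUnion G e)) 0) := by
  refine (sum_nearlyIndep_one G fun n => n).trans (sum_congr rfl fun e _ => ?_)
  rw [sigmaNI, sumNI, sum_add_distrib, sum_const, smul_eq_mul, add_comm, mul_comm]

theorem stmt6 {V : Type*} [Fintype V] (G : SimpleGraph V) :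
    (∀ k : ℕ, sigmaNIk G 1 k =
        ∑ e ∈ G.edgeFinset, sigmaNIkZ (deleteVerts G (nbhdUnion G e)) 0 ((k : ℤ) - 2)) ∧
    sigmaNI G 1 = ∑ e ∈ G.edgeFinset, sigmaNI (deleteVerts G (nbhdUnion G e)) 0 ∧
    sumNI G 1 = ∑ e ∈ G.edgeFinset,
        (2 * sigmaNI (deleteVerts G (nbhdUnion G e)) 0 +
          sumNI (deleteVerts G (nbhdUnion G e)) 0) :=
  ⟨sigmaNIk_one G, sigmaNI_one G, sumNI_one G⟩
end
end

section
/- Let G be a finite simple graph on n vertices with at least one edge, and set δ_1(G) = min over edges uv of |N(u) ∪ N(v)| and δ_2(G) = max over edges uv of |N(u) ∪ N(v)|. Then 2 ≤ (3n + 2 − 3δ_2(G)) / (n + 1 − δ_2(G)) ≤ av_1(G) ≤ (n + 4 − δ_1(G)) / 2 ≤ (n + 2)/2. -/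
open scoped Classical
open Finset

noncomputable section

/-!
A set with exactly one induced edge `uv` is `{u, v} ∪ T` with `T` an independent set inside
`W = V ∖ (N(u) ∪ N(v))`, so `σ₁` and `S₁` split into sums over the edges of such fibres. Erasing
a vertex `w ∈ W` injects the members of a fibre containing `w` into those avoiding it, so each
vertex of `W` lies in at most half of them and the average size is at most `2 + |W|/2`. On the
other hand the fibre contains `{u, v}` and the `|W|` sets `{u, v, w}`, and all its other members
are larger than `{u, v}`, so its average size is at least `3 - 1/(|W| + 1)`. Both bounds survive
summation over the edges, and `|W| = n - |N(u) ∪ N(v)|` lies between `n - δ₂` and `n - δ₁`.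
-/

namespace Finset
variable {α : Type*} [DecidableEq α]

theorem sum_card_eq_sum_card_filter_mem {F : Finset (Finset α)} {U : Finset α}
    (hF : ∀ S ∈ F, S ⊆ U) : ∑ S ∈ F, #S = ∑ w ∈ U, #{S ∈ F | w ∈ S} :=
  calc ∑ S ∈ F, #S = ∑ S ∈ F, #(U.bipartiteAbove (fun S w => w ∈ S) S) :=
        sum_congr rfl fun S hS => by
          rw [bipartiteAbove, filter_mem_eq_inter, inter_eq_right.mpr (hF S hS)]
    _ = _ := sum_card_bipartiteAbove_eq_sum_card_bipartiteBelow _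

theorem two_mul_card_filter_mem_le {F : Finset (Finset α)} {w : α}
    (herase : ∀ S ∈ F, S.erase w ∈ F) : 2 * #{S ∈ F | w ∈ S} ≤ #F := by
  have hinj : #{S ∈ F | w ∈ S} ≤ #{S ∈ F | w ∉ S} := by
    refine card_le_card_of_injOn (·.erase w) (fun S hS => ?_) (fun S hS T hT hST => ?_)
    · simp only [coe_filter, Set.mem_ofPred_eq] at hS ⊢
      exact ⟨herase S hS.1, notMem_erase w S⟩
    · simp only [coe_filter, Set.mem_ofPred_eq] at hS hT hST
      rw [← insert_erase hS.2, ← insert_erase hT.2, hST]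
  have := card_filter_add_card_filter_not (s := F) (w ∈ ·)
  omega

theorem two_mul_sum_card_le {F : Finset (Finset α)} {C W : Finset α}
    (hsub : ∀ S ∈ F, S ⊆ C ∪ W) (herase : ∀ S ∈ F, ∀ w ∈ W, S.erase w ∈ F) :
    2 * ∑ S ∈ F, #S ≤ (2 * #C + #W) * #F := by
  have hC : ∑ w ∈ C, #{S ∈ F | w ∈ S} ≤ #C * #F := by
    simpa using sum_le_sum fun w (_ : w ∈ C) => card_filter_le F (w ∈ ·)
  have hW : 2 * ∑ w ∈ W, #{S ∈ F | w ∈ S} ≤ #W * #F := by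
    simpa [mul_sum] using sum_le_sum fun w hw => two_mul_card_filter_mem_le (herase · · w hw)
  have hCW : ∑ w ∈ C ∪ W, #{S ∈ F | w ∈ S} ≤
      ∑ w ∈ C, #{S ∈ F | w ∈ S} + ∑ w ∈ W, #{S ∈ F | w ∈ S} := by
    rw [← sum_union_inter]
    exact Nat.le_add_right _ _
  rw [sum_card_eq_sum_card_filter_mem hsub]
  linarith

theorem card_add_one_le_card_of_insert_mem {F : Finset (Finset α)} {C W : Finset α}
    (hWC : Disjoint W C) (hC : C ∈ F) (hins : ∀ w ∈ W, insert w C ∈ F) : #W + 1 ≤ #F := by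
  have hinj : Set.InjOn (insert · C) W := fun w hw w' _ h => by
    simp only at h
    have : w ∈ insert w' C := h ▸ mem_insert_self w C
    exact (mem_insert.mp this).resolve_right (disjoint_left.mp hWC hw)
  have hnotMem : C ∉ W.image (insert · C) := by
    simp only [mem_image, not_exists, not_and]
    exact fun w hw h => disjoint_left.mp hWC hw (h ▸ mem_insert_self w C)
  calc #W + 1 = #(insert C (W.image (insert · C))) := by
        rw [card_insert_of_notMem hnotMem, card_image_of_injOn hinj]
    _ ≤ #F := card_le_card <| insert_subset hC <| image_subset_iff.mpr hins

theorem mul_card_le_mul_sum_card {F : Finset (Finset α)} {C : Finset α} {k : ℕ}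
    (hC : ∀ S ∈ F, C ⊆ S) (hk : k + 1 ≤ #F) :
    ((#C + 1) * k + #C) * #F ≤ (k + 1) * ∑ S ∈ F, #S := by
  have hbig : (#C + 1) * #F ≤ ∑ S ∈ F, #S + 1 := by
    have hS : ∀ S ∈ F, #C + 1 ≤ #S + if C = S then 1 else 0 := fun S hS => by
      split_ifs with h
      · rw [h]
      · exact Nat.succ_le_of_lt <| card_lt_card <| ssubset_of_subset_of_ne (hC S hS) h
    have := sum_le_sum hS
    simp only [sum_add_distrib, sum_ite_eq, sum_const, smul_eq_mul] at this
    split_ifs at this <;> linarith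
  -- multiply `hbig` by `k + 1`; the resulting loss of `k + 1` is covered by `k + 1 ≤ #F`
  nlinarith [Nat.mul_le_mul_left (k + 1) hbig]

end Finset

section Graph
variable {V : Type*} [Fintype V] {G : SimpleGraph V}

def inducedEdges (G : SimpleGraph V) (S : Finset V) : Finset (Sym2 V) :=
  G.edgeFinset.filter fun e => ∀ v ∈ e, v ∈ S

def edgeFiber (G : SimpleGraph V) (e : Sym2 V) : Finset (Finset V) :=
  {S | inducedEdges G S = {e}}

def nonNeighbors (G : SimpleGraph V) (u v : V) : Finset V :=
  (G.neighborFinset u ∪ G.neighborFinset v)ᶜ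

theorem mem_inducedEdges {S : Finset V} {a b : V} :
    s(a, b) ∈ inducedEdges G S ↔ G.Adj a b ∧ a ∈ S ∧ b ∈ S := by
  simp [inducedEdges]

theorem nearlyIndep_one_eq_biUnion : nearlyIndep G 1 = G.edgeFinset.biUnion (edgeFiber G) := by
  ext S
  simp only [nearlyIndep, Finset.mem_filter_univ, mem_biUnion, edgeFiber]
  change #(inducedEdges G S) = 1 ↔ _
  rw [card_eq_one]
  exact ⟨fun ⟨e, he⟩ => ⟨e, filter_subset _ _ (he ▸ mem_singleton_self e), he⟩,
    fun ⟨e, _, he⟩ => ⟨e, he⟩⟩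

theorem pairwiseDisjoint_edgeFiber :
    (G.edgeFinset : Set (Sym2 V)).PairwiseDisjoint (edgeFiber G) := fun e _ e' _ hne =>
  disjoint_left.mpr fun S hS hS' => by
    simp only [edgeFiber, mem_filter_univ] at hS hS'
    exact hne (singleton_injective (hS.symm.trans hS'))

theorem sigmaNI_one_eq_sum : sigmaNI G 1 = ∑ e ∈ G.edgeFinset, #(edgeFiber G e) := by
  rw [sigmaNI, nearlyIndep_one_eq_biUnion, card_biUnion pairwiseDisjoint_edgeFiber]

theorem sumNI_one_eq_sum : sumNI G 1 = ∑ e ∈ G.edgeFinset, ∑ S ∈ edgeFiber G e, #S := by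
  rw [sumNI, nearlyIndep_one_eq_biUnion, sum_biUnion pairwiseDisjoint_edgeFiber]

theorem mem_nonNeighbors {u v w : V} : w ∈ nonNeighbors G u v ↔ ¬G.Adj u w ∧ ¬G.Adj v w := by
  simp [nonNeighbors]

theorem card_nonNeighbors_add_ncard (u v : V) :
    #(nonNeighbors G u v) + (nbhdUnion G s(u, v)).ncard = Fintype.card V := by
  have : nbhdUnion G s(u, v) = ↑(G.neighborFinset u ∪ G.neighborFinset v) := by
    ext; simp [nbhdUnion]
  rw [this, Set.ncard_coe_finset, nonNeighbors, card_compl, Nat.sub_add_cancel (card_le_univ _)]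

section Fiber
variable {u v : V} (huv : G.Adj u v)
include huv

theorem mem_edgeFiber {S : Finset V} : S ∈ edgeFiber G s(u, v) ↔
    u ∈ S ∧ v ∈ S ∧ ∀ a ∈ S, ∀ b ∈ S, G.Adj a b → s(a, b) = s(u, v) := by
  simp only [edgeFiber, Finset.mem_filter_univ, eq_singleton_iff_unique_mem,
    mem_inducedEdges, Sym2.forall, and_imp]
  exact ⟨fun ⟨⟨_, hu, hv⟩, h⟩ => ⟨hu, hv, fun a ha b hb hab => h a b hab ha hb⟩,
    fun ⟨hu, hv, h⟩ => ⟨⟨huv, hu, hv⟩, fun a b hab ha hb => h a ha b hb hab⟩⟩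

theorem pair_subset_of_mem_edgeFiber {S : Finset V} (hS : S ∈ edgeFiber G s(u, v)) :
    {u, v} ⊆ S := by
  obtain ⟨hu, hv, -⟩ := (mem_edgeFiber huv).mp hS
  exact insert_subset hu (singleton_subset_iff.mpr hv)

theorem subset_of_mem_edgeFiber {S : Finset V} (hS : S ∈ edgeFiber G s(u, v)) :
    S ⊆ {u, v} ∪ nonNeighbors G u v := by
  obtain ⟨hu, hv, hS⟩ := (mem_edgeFiber huv).mp hS
  intro w hw
  by_cases huw : G.Adj u w
  · simp [Sym2.congr_right.mp (hS u hu w hw huw)]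
  by_cases hvw : G.Adj v w
  · simp [Sym2.congr_right.mp ((hS v hv w hw hvw).trans Sym2.eq_swap)]
  · exact mem_union_right _ (mem_nonNeighbors.mpr ⟨huw, hvw⟩)

theorem disjoint_nonNeighbors_pair : Disjoint (nonNeighbors G u v) {u, v} := by
  refine disjoint_left.mpr fun w hw hwuv => ?_
  obtain ⟨huw, hvw⟩ := mem_nonNeighbors.mp hw
  rcases mem_insert.mp hwuv with rfl | hwv
  · exact hvw huv.symm
  · exact huw (mem_singleton.mp hwv ▸ huv)

theorem erase_mem_edgeFiber {S : Finset V} (hS : S ∈ edgeFiber G s(u, v)) {w : V}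
    (hw : w ∈ nonNeighbors G u v) : S.erase w ∈ edgeFiber G s(u, v) := by
  obtain ⟨hu, hv, hS⟩ := (mem_edgeFiber huv).mp hS
  have hwuv : w ∉ ({u, v} : Finset V) := disjoint_left.mp (disjoint_nonNeighbors_pair huv) hw
  simp only [mem_insert, mem_singleton, not_or] at hwuv
  exact (mem_edgeFiber huv).mpr ⟨mem_erase.mpr ⟨Ne.symm hwuv.1, hu⟩,
    mem_erase.mpr ⟨Ne.symm hwuv.2, hv⟩,
    fun a ha b hb => hS a (mem_of_mem_erase ha) b (mem_of_mem_erase hb)⟩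

theorem insert_mem_edgeFiber {w : V} (hw : w ∈ nonNeighbors G u v) :
    insert w {u, v} ∈ edgeFiber G s(u, v) := by
  obtain ⟨huw, hvw⟩ := mem_nonNeighbors.mp hw
  refine (mem_edgeFiber huv).mpr ⟨by simp, by simp, fun a ha b hb hab => ?_⟩
  simp only [mem_insert, mem_singleton] at ha hb
  rcases ha with rfl | rfl | rfl <;> rcases hb with rfl | rfl | rfl <;>
    first | exact absurd hab G.irrefl | simp_all [Sym2.eq_swap, SimpleGraph.adj_comm]

theorem pair_mem_edgeFiber : {u, v} ∈ edgeFiber G s(u, v) := by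
  refine (mem_edgeFiber huv).mpr ⟨by simp, by simp, fun a ha b hb hab => ?_⟩
  simp only [mem_insert, mem_singleton] at ha hb
  rcases ha with rfl | rfl <;> rcases hb with rfl | rfl <;>
    first | exact absurd hab G.irrefl | simp [Sym2.eq_swap]

theorem two_mul_sum_card_edgeFiber_le :
    2 * ∑ S ∈ edgeFiber G s(u, v), #S ≤
      (#(nonNeighbors G u v) + 4) * #(edgeFiber G s(u, v)) := by
  have h := two_mul_sum_card_le (fun S hS => subset_of_mem_edgeFiber huv hS)
    fun S hS w hw => erase_mem_edgeFiber huv hS hw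
  rwa [card_pair huv.ne, add_comm] at h

theorem card_nonNeighbors_add_one_le : #(nonNeighbors G u v) + 1 ≤ #(edgeFiber G s(u, v)) :=
  card_add_one_le_card_of_insert_mem (disjoint_nonNeighbors_pair huv) (pair_mem_edgeFiber huv)
    fun _ => insert_mem_edgeFiber huv

end Fiber

theorem two_mul_sumNI_one_le {m : ℕ}
    (hm : ∀ e ∈ G.edgeFinset, Fintype.card V ≤ m + (nbhdUnion G e).ncard) :
    2 * sumNI G 1 ≤ (m + 4) * sigmaNI G 1 := by
  rw [sumNI_one_eq_sum, sigmaNI_one_eq_sum, mul_sum, mul_sum]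
  refine sum_le_sum fun e he => ?_
  induction e using Sym2.ind with | _ u v =>
  have huv : G.Adj u v := SimpleGraph.mem_edgeFinset.mp he
  have := card_nonNeighbors_add_ncard (G := G) u v
  calc _ ≤ (#(nonNeighbors G u v) + 4) * #(edgeFiber G s(u, v)) :=
        two_mul_sum_card_edgeFiber_le huv
    _ ≤ _ := Nat.mul_le_mul_right _ (by linarith [hm _ he])

theorem mul_sigmaNI_one_le {k : ℕ}
    (hk : ∀ e ∈ G.edgeFinset, k + (nbhdUnion G e).ncard ≤ Fintype.card V) :
    (3 * k + 2) * sigmaNI G 1 ≤ (k + 1) * sumNI G 1 := by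
  rw [sumNI_one_eq_sum, sigmaNI_one_eq_sum, mul_sum, mul_sum]
  refine sum_le_sum fun e he => ?_
  induction e using Sym2.ind with | _ u v =>
  have huv : G.Adj u v := SimpleGraph.mem_edgeFinset.mp he
  have := card_nonNeighbors_add_ncard (G := G) u v
  have h := mul_card_le_mul_sum_card (k := k) (fun S => pair_subset_of_mem_edgeFiber huv (S := S))
    (by linarith [hk _ he, card_nonNeighbors_add_one_le huv])
  rwa [card_pair huv.ne] at h

theorem sigmaNI_one_pos (hE : G.edgeFinset.Nonempty) : 0 < sigmaNI G 1 := by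
  obtain ⟨e, he⟩ := hE
  induction e using Sym2.ind with | _ u v =>
  rw [sigmaNI_one_eq_sum]
  exact sum_pos' (fun _ _ => Nat.zero_le _)
    ⟨_, he, card_pos.mpr ⟨_, pair_mem_edgeFiber (SimpleGraph.mem_edgeFinset.mp he)⟩⟩

theorem ncard_nbhdUnion_le (e : Sym2 V) : (nbhdUnion G e).ncard ≤ Fintype.card V := by
  induction e using Sym2.ind with | _ u v =>
  exact (card_nonNeighbors_add_ncard u v).symm ▸ Nat.le_add_left _ _

theorem two_le_ncard_nbhdUnion {e : Sym2 V} (he : e ∈ G.edgeFinset) :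
    2 ≤ (nbhdUnion G e).ncard := by
  induction e using Sym2.ind with | _ u v =>
  have huv : G.Adj u v := SimpleGraph.mem_edgeFinset.mp he
  have h := card_le_univ (nonNeighbors G u v ∪ {u, v})
  rw [card_union_of_disjoint (disjoint_nonNeighbors_pair huv), card_pair huv.ne,
    ← card_nonNeighbors_add_ncard (G := G) u v] at h
  omega

theorem avNI_eq_div {l : ℕ} (h : 0 < sigmaNI G l) : avNI G l = sumNI G l / sigmaNI G l :=
  if_neg h.ne'

theorem avNI_one_le (hE : G.edgeFinset.Nonempty) {m : ℕ}
    (hm : ∀ e ∈ G.edgeFinset, Fintype.card V ≤ m + (nbhdUnion G e).ncard) :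
    avNI G 1 ≤ (m + 4) / 2 := by
  have hσ : (0 : ℚ) < sigmaNI G 1 := by exact_mod_cast sigmaNI_one_pos hE
  have h : ((2 * sumNI G 1 : ℕ) : ℚ) ≤ ((m + 4) * sigmaNI G 1 : ℕ) := by
    exact_mod_cast two_mul_sumNI_one_le hm
  push_cast at h
  rw [avNI_eq_div (sigmaNI_one_pos hE), div_le_div_iff₀ hσ two_pos]
  linarith

theorem le_avNI_one (hE : G.edgeFinset.Nonempty) {k : ℕ}
    (hk : ∀ e ∈ G.edgeFinset, k + (nbhdUnion G e).ncard ≤ Fintype.card V) :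
    (3 * k + 2) / (k + 1) ≤ avNI G 1 := by
  have hσ : (0 : ℚ) < sigmaNI G 1 := by exact_mod_cast sigmaNI_one_pos hE
  have h : (((3 * k + 2) * sigmaNI G 1 : ℕ) : ℚ) ≤ ((k + 1) * sumNI G 1 : ℕ) := by
    exact_mod_cast mul_sigmaNI_one_le hk
  push_cast at h
  rw [avNI_eq_div (sigmaNI_one_pos hE), div_le_div_iff₀ (by positivity) hσ]
  linarith

end Graph

theorem stmt10 {V : Type*} [Fintype V] (G : SimpleGraph V) (hE : G.edgeFinset.Nonempty)
    (d₁ d₂ : ℕ)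
    (hd₁ : d₁ = G.edgeFinset.inf' hE fun e => (nbhdUnion G e).ncard)
    (hd₂ : d₂ = G.edgeFinset.sup' hE fun e => (nbhdUnion G e).ncard) :
    2 ≤ (3 * (Fintype.card V : ℚ) + 2 - 3 * d₂) / ((Fintype.card V : ℚ) + 1 - d₂) ∧
    (3 * (Fintype.card V : ℚ) + 2 - 3 * d₂) / ((Fintype.card V : ℚ) + 1 - d₂) ≤ avNI G 1 ∧
    avNI G 1 ≤ ((Fintype.card V : ℚ) + 4 - d₁) / 2 ∧
    ((Fintype.card V : ℚ) + 4 - d₁) / 2 ≤ ((Fintype.card V : ℚ) + 2) / 2 := by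
  set n := Fintype.card V
  have hd₁e : ∀ e ∈ G.edgeFinset, d₁ ≤ (nbhdUnion G e).ncard := hd₁ ▸ fun e he => inf'_le _ he
  have hd₂e : ∀ e ∈ G.edgeFinset, (nbhdUnion G e).ncard ≤ d₂ :=
    hd₂ ▸ fun e he => le_sup' (fun e => (nbhdUnion G e).ncard) he
  have h2d₁ : (2 : ℚ) ≤ d₁ := by
    exact_mod_cast hd₁ ▸ le_inf' hE _ fun e he => two_le_ncard_nbhdUnion he
  have hd₁n : d₁ ≤ n := (hd₁e _ hE.choose_spec).trans (ncard_nbhdUnion_le _)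
  have hd₂n : d₂ ≤ n := hd₂ ▸ sup'_le hE _ fun e _ => ncard_nbhdUnion_le e
  have hupper := avNI_one_le hE (m := n - d₁) fun e he => by have := hd₁e e he; omega
  have hlower := le_avNI_one hE (k := n - d₂) fun e he => by have := hd₂e e he; omega
  push_cast [Nat.cast_sub hd₁n, Nat.cast_sub hd₂n] at hupper hlower
  have hd₂nQ : (d₂ : ℚ) ≤ n := by exact_mod_cast hd₂n
  refine ⟨?_, by convert hlower using 1; ring, by convert hupper using 2; ring, by linarith⟩
  rw [le_div_iff₀ (by linarith)]
  linarith
end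
end

section
/- For every finite simple graph G on n vertices that has at least one edge, av_0(G) < n/2. -/
open scoped Classical
open Finset

noncomputable section

/-! Independent sets form a down-closed family. For each vertex `w`, deleting `w` injects the
independent sets containing `w` into those avoiding it, so `w` lies in at most half of them;
summing over `w` gives `2 S_0(G) ≤ n σ_0(G)`. For an edge `uv`, the set `{v}` avoids `u` but
`{u, v}` is not independent, so the injection at `u` misses `{v}` and the inequality is strict. -/

namespace Finset

variable {α : Type*} [DecidableEq α]

theorem card_memberSubfamily_eq_card_filter_mem (a : α) (𝒜 : Finset (Finset α)) :
    #(𝒜.memberSubfamily a) = #{s ∈ 𝒜 | a ∈ s} :=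
  card_image_of_injOn <| (erase_injOn' a).mono fun _ hs => (mem_filter.1 hs).2

theorem sum_card_eq_sum_card_memberSubfamily [Fintype α] (𝒜 : Finset (Finset α)) :
    ∑ s ∈ 𝒜, #s = ∑ a, #(𝒜.memberSubfamily a) := by
  simp_rw [card_memberSubfamily_eq_card_filter_mem, card_eq_sum_ones, sum_filter]
  rw [sum_comm]
  exact sum_congr rfl fun s _ => by rw [sum_ite_mem, univ_inter]

end Finset

namespace IsLowerSet

variable {α : Type*} [DecidableEq α] {𝒜 : Finset (Finset α)} {s : Finset α} {a : α}

theorem two_mul_card_memberSubfamily_le (h : IsLowerSet (𝒜 : Set (Finset α))) :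
    2 * #(𝒜.memberSubfamily a) ≤ #𝒜 := by
  have := card_le_card (h.memberSubfamily_subset_nonMemberSubfamily (a := a))
  have := card_memberSubfamily_add_card_nonMemberSubfamily a 𝒜
  omega

theorem two_mul_card_memberSubfamily_lt (h : IsLowerSet (𝒜 : Set (Finset α)))
    (hs : s ∈ 𝒜) (ha : a ∉ s) (has : insert a s ∉ 𝒜) :
    2 * #(𝒜.memberSubfamily a) < #𝒜 := by
  have hssub : 𝒜.memberSubfamily a ⊂ 𝒜.nonMemberSubfamily a :=
    (ssubset_iff_of_subset h.memberSubfamily_subset_nonMemberSubfamily).2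
      ⟨s, mem_nonMemberSubfamily.2 ⟨hs, ha⟩, fun hs' => has (mem_memberSubfamily.1 hs').1⟩
  have := card_lt_card hssub
  have := card_memberSubfamily_add_card_nonMemberSubfamily a 𝒜
  omega

theorem two_mul_sum_card_lt [Fintype α] (h : IsLowerSet (𝒜 : Set (Finset α)))
    (hs : s ∈ 𝒜) (ha : a ∉ s) (has : insert a s ∉ 𝒜) :
    2 * ∑ t ∈ 𝒜, #t < Fintype.card α * #𝒜 := by
  rw [sum_card_eq_sum_card_memberSubfamily, mul_sum, ← card_univ, ← smul_eq_mul, ← sum_const]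
  exact sum_lt_sum (fun b _ => h.two_mul_card_memberSubfamily_le)
    ⟨a, mem_univ a, h.two_mul_card_memberSubfamily_lt hs ha has⟩

end IsLowerSet

section

variable {V : Type*} [Fintype V] {G : SimpleGraph V}

theorem edgesIn_eq_zero_iff_isIndepSet {S : Finset V} :
    edgesIn G S = 0 ↔ G.IsIndepSet (S : Set V) := by
  simp only [edgesIn, card_eq_zero, filter_eq_empty_iff, SimpleGraph.mem_edgeFinset]
  constructor
  · intro h x hx y hy _ hxy
    refine h (G.mem_edgeSet.2 hxy) fun v hv => ?_
    rcases Sym2.mem_iff.1 hv with rfl | rfl <;> assumption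
  · intro h e he hS
    induction e using Sym2.ind with
    | h x y =>
      exact h (hS x (Sym2.mem_mk_left x y)) (hS y (Sym2.mem_mk_right x y)) he.ne he

theorem mem_nearlyIndep_zero_iff {S : Finset V} :
    S ∈ nearlyIndep G 0 ↔ G.IsIndepSet (S : Set V) := by
  rw [nearlyIndep, mem_filter, edgesIn_eq_zero_iff_isIndepSet]
  exact and_iff_right (mem_univ S)

theorem isLowerSet_nearlyIndep_zero (G : SimpleGraph V) :
    IsLowerSet (nearlyIndep G 0 : Set (Finset V)) := fun _ _ hST hS =>
  mem_nearlyIndep_zero_iff.2 <| (mem_nearlyIndep_zero_iff.1 hS).mono (coe_subset.2 hST)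

end

theorem stmt11 {V : Type*} [Fintype V] (G : SimpleGraph V) (hE : G.edgeSet.Nonempty) :
    avNI G 0 < (Fintype.card V : ℚ) / 2 := by
  obtain ⟨⟨u, v⟩, he⟩ := hE
  have hv : {v} ∈ nearlyIndep G 0 := mem_nearlyIndep_zero_iff.2 (by simp)
  have huv : {u, v} ∉ nearlyIndep G 0 := fun h =>
    mem_nearlyIndep_zero_iff.1 h (by simp) (by simp) he.ne he
  have hlt : 2 * sumNI G 0 < Fintype.card V * sigmaNI G 0 :=
    (isLowerSet_nearlyIndep_zero G).two_mul_sum_card_lt hv (mem_singleton.not.2 he.ne) huv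
  have hσ : 0 < sigmaNI G 0 := card_pos.2 ⟨_, hv⟩
  rw [avNI, if_neg hσ.ne', div_lt_div_iff₀ (by exact_mod_cast hσ) two_pos, mul_comm]
  exact_mod_cast hlt
end
end

section
/- For every n ≥ 4, the tree R_n obtained from the star S_{n−1} by attaching a pendant edge at one of its leaves satisfies av_1(R_n) = ( 5n − 13 + (n+1)·2^{n−4} ) / ( 2n − 5 + 2^{n−3} ). Moreover av_1(R_n) < (n+1)/2 for all n ≥ 4, and av_1(R_n) > n/2 for all n ≥ 4 with n ∉ {6, 7, 8}. -/
/-! Let `c` be the centre of `R_n`, `w` the pendant vertex and `a` its neighbour. A vertex set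
inducing exactly one edge either contains `c`, exactly one further neighbour `x` of `c` and
possibly `w` (unless `x = a`), or avoids `c` and contains `a`, `w` and an arbitrary set of the
other `k = n - 3` vertices. Counting these gives `σ_1 = 2k + 1 + 2^k` and
`S_1 = 5k + 2 + k 2^(k-1) + 2^(k+1)`; the upper bound on `av_1 = S_1 / σ_1` reduces to `k < 2k²`
and the lower bound to `2k² - 3k - 1 < 2^k`, which fails exactly for `k = 3, 4, 5`. -/

open scoped Classical
open Finset

noncomputable section

/-- The tree `R n` on vertex set `Fin n`: the star with centre `0` and leaves
`1, …, n - 2`, together with an extra vertex `n - 1` joined to the leaf `1`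
(i.e. the star on `n - 1` vertices with one edge subdivided once). -/
def Rgraph (n : ℕ) : SimpleGraph (Fin n) :=
  SimpleGraph.fromRel fun a b =>
    (a.val = 0 ∧ b.val ≠ 0 ∧ b.val ≠ n - 1) ∨ (a.val = 1 ∧ b.val = n - 1)

lemma Finset.sum_card_powerset {α : Type*} (s : Finset α) :
    ∑ t ∈ s.powerset, #t = #s * 2 ^ (#s - 1) := by
  refine (sum_powerset_apply_card fun k => k).trans ?_
  simp only [smul_eq_mul, mul_comm, Nat.sum_range_mul_choose]

section StarWithPendant

variable {V : Type*} [Fintype V]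

def IsStarWithPendant (G : SimpleGraph V) (c a w : V) : Prop :=
  G.edgeFinset = ((univ \ {c, w}).image fun x => s(c, x)) ∪ {s(a, w)}

variable {G : SimpleGraph V} {c a w : V}

lemma IsStarWithPendant.edgesIn_eq (hG : IsStarWithPendant G c a w) (hac : a ≠ c)
    (hwc : w ≠ c) (S : Finset V) :
    edgesIn G S =
      (if c ∈ S then #(S \ {c, w}) else 0) + if a ∈ S ∧ w ∈ S then 1 else 0 := by
  have hdisj : Disjoint ((univ \ {c, w}).image fun x => s(c, x)) {s(a, w)} := by
    simp only [disjoint_singleton_right, mem_image, Sym2.eq_iff, not_exists]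
    grind
  rw [edgesIn, hG, filter_union, card_union_of_disjoint (hdisj.mono (filter_subset _ _)
    (filter_subset _ _)), filter_image, card_image_of_injective _ fun _ _ => Sym2.congr_right.1]
  congr 1
  · split_ifs with hc
    · congr 1
      ext x
      simp only [mem_filter, mem_sdiff, mem_univ, mem_insert, mem_singleton, Sym2.mem_iff,
        forall_eq_or_imp, forall_eq, hc, true_and, not_or]
      tauto
    · simp [hc]
  · rw [filter_singleton]
    simp only [Sym2.mem_iff, forall_eq_or_imp, forall_eq]
    split_ifs <;> rfl

lemma IsStarWithPendant.sum_nearlyIndep_one {M : Type*} [AddCommMonoid M]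
    (hG : IsStarWithPendant G c a w) (hac : a ≠ c) (hwc : w ≠ c) (haw : a ≠ w) (f : ℕ → M) :
    ∑ S ∈ nearlyIndep G 1, f #S =
      (#(univ \ {c, a, w}) + 1) • f 2 + #(univ \ {c, a, w}) • f 3 +
        ∑ T ∈ (univ \ {c, a, w}).powerset, f (#T + 2) := by
  set L := univ \ {c, a, w}
  have huniv : (univ : Finset V) = insert c (insert w (insert a L)) := by
    ext x
    simp only [mem_univ, mem_insert, mem_sdiff, mem_singleton, not_or, true_and, true_iff, L]
    tauto
  have hc : c ∉ insert w (insert a L) := by simp [L, hwc.symm, hac.symm]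
  have hw : w ∉ insert a L := by simp [L, haw.symm]
  have haL : a ∉ L := by simp [L]
  calc ∑ S ∈ nearlyIndep G 1, f #S
      = ∑ T ∈ L.powerset,
          ((if #T = 1 then f 2 + f 3 else 0) + (if T = ∅ then f 2 else 0) + f (#T + 2)) := by
        rw [nearlyIndep, sum_filter, ← powerset_univ, huniv]
        simp only [sum_powerset_insert hc, sum_powerset_insert hw, sum_powerset_insert haL,
          ← sum_add_distrib]
        refine sum_congr rfl fun T hT => ?_
        have hcT : c ∉ T := fun h => by simpa [L] using mem_powerset.1 hT h
        have haT : a ∉ T := fun h => by simpa [L] using mem_powerset.1 hT h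
        have hwT : w ∉ T := fun h => by simpa [L] using mem_powerset.1 hT h
        have hsdiff : T \ {c, w} = T := sdiff_eq_self_of_disjoint (by simp [hcT, hwT])
        simp only [hG.edgesIn_eq hac hwc, mem_insert, mem_singleton, hcT, haT, hwT, hac, hwc,
          haw, hac.symm, hwc.symm, haw.symm, insert_sdiff_of_mem, insert_sdiff_of_notMem,
          hsdiff, card_insert_of_notMem, not_false_eq_true, card_eq_zero, or_self, or_false,
          or_true, and_self, and_false, and_true, ↓reduceIte, add_zero, zero_add, zero_ne_one,
          Nat.add_eq_right, Nat.add_eq_zero_iff, one_ne_zero]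
        split_ifs <;> simp_all [add_comm, add_left_comm]
    _ = _ := by
        rw [sum_add_distrib, sum_add_distrib, sum_ite_eq_of_mem' _ _ _ (empty_mem_powerset _),
          ← sum_filter, ← powersetCard_eq_filter, sum_const, card_powersetCard,
          Nat.choose_one_right, smul_add, succ_nsmul]
        abel

lemma card_univ_sdiff_triple (hac : a ≠ c) (hwc : w ≠ c) (haw : a ≠ w) {k : ℕ}
    (hV : Fintype.card V = k + 3) : #(univ \ {c, a, w}) = k := by
  rw [card_sdiff_of_subset (subset_univ _), card_univ, hV,
    card_eq_three.2 ⟨c, a, w, hac.symm, hwc.symm, haw, rfl⟩, Nat.add_sub_cancel]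

lemma IsStarWithPendant.sigmaNI_one (hG : IsStarWithPendant G c a w) (hac : a ≠ c)
    (hwc : w ≠ c) (haw : a ≠ w) {k : ℕ} (hV : Fintype.card V = k + 3) :
    sigmaNI G 1 = 2 * k + 1 + 2 ^ k := by
  rw [sigmaNI, card_eq_sum_ones, hG.sum_nearlyIndep_one hac hwc haw fun _ => 1]
  simp only [smul_eq_mul, mul_one, sum_const, card_powerset,
    card_univ_sdiff_triple hac hwc haw hV]
  ring

lemma IsStarWithPendant.sumNI_one (hG : IsStarWithPendant G c a w) (hac : a ≠ c)
    (hwc : w ≠ c) (haw : a ≠ w) {k : ℕ} (hV : Fintype.card V = k + 3) :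
    sumNI G 1 = 5 * k + 2 + k * 2 ^ (k - 1) + 2 ^ (k + 1) := by
  rw [sumNI]
  refine (hG.sum_nearlyIndep_one hac hwc haw fun k => k).trans ?_
  simp only [smul_eq_mul, sum_add_distrib, sum_card_powerset, sum_const, card_powerset,
    card_univ_sdiff_triple hac hwc haw hV]
  ring

end StarWithPendant

lemma isStarWithPendant_Rgraph (m : ℕ) :
    IsStarWithPendant (Rgraph (m + 4)) 0 1 (Fin.last (m + 3)) := by
  ext e
  induction e using Sym2.ind with
  | _ x y =>
    rw [SimpleGraph.mem_edgeFinset, SimpleGraph.mem_edgeSet, Rgraph, SimpleGraph.fromRel_adj]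
    simp only [mem_union, mem_image, mem_sdiff, mem_univ, mem_insert, mem_singleton,
      Sym2.eq_iff, true_and, and_or_left, exists_or, exists_eq_right_right]
    simp only [Fin.ext_iff, Fin.val_last, Fin.val_zero, Fin.val_one]
    omega

lemma avNI_Rgraph (m : ℕ) :
    avNI (Rgraph (m + 4)) 1 =
      (5 * (m : ℚ) + 7 + ((m : ℚ) + 5) * 2 ^ m) / (2 * (m : ℚ) + 3 + 2 ^ (m + 1)) := by
  have hG := isStarWithPendant_Rgraph m
  have h10 : (1 : Fin (m + 4)) ≠ 0 := by simp
  have hl0 : Fin.last (m + 3) ≠ 0 := by simp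
  have h1l : (1 : Fin (m + 4)) ≠ Fin.last (m + 3) := by simp [Fin.ext_iff]
  have hV : Fintype.card (Fin (m + 4)) = m + 1 + 3 := Fintype.card_fin _
  have hσ := hG.sigmaNI_one h10 hl0 h1l hV
  have hS := hG.sumNI_one h10 hl0 h1l hV
  rw [Nat.add_sub_cancel] at hS
  rw [avNI, if_neg (by omega), hσ, hS]
  push_cast
  ring

lemma two_mul_sq_add_self_lt_two_pow_succ_add_two {m : ℕ} (hm : m ≤ 1 ∨ 5 ≤ m) :
    2 * m ^ 2 + m < 2 ^ (m + 1) + 2 := by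
  rcases hm with hm | hm
  · interval_cases m <;> norm_num
  · induction m, hm using Nat.le_induction with
    | base => norm_num
    | succ k hk ih =>
      rw [pow_succ 2 (k + 1)]
      nlinarith

theorem stmt15 (n : ℕ) (hn : 4 ≤ n) :
    avNI (Rgraph n) 1 =
      (5 * (n : ℚ) - 13 + ((n : ℚ) + 1) * 2 ^ (n - 4)) / (2 * (n : ℚ) - 5 + 2 ^ (n - 3)) ∧
    avNI (Rgraph n) 1 < ((n : ℚ) + 1) / 2 ∧
    (n ∉ ({6, 7, 8} : Set ℕ) → (n : ℚ) / 2 < avNI (Rgraph n) 1) := by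
  obtain ⟨m, rfl⟩ : ∃ m, n = m + 4 := ⟨n - 4, by omega⟩
  have hD : (0 : ℚ) < 2 * m + 3 + 2 ^ (m + 1) := by positivity
  have hpow : (2 : ℚ) ^ (m + 1) = 2 * 2 ^ m := pow_succ' 2 m
  rw [avNI_Rgraph, Nat.add_sub_cancel, show m + 4 - 3 = m + 1 by omega]
  refine ⟨by congr 1 <;> push_cast <;> ring, ?_, fun hm => ?_⟩
  · rw [div_lt_div_iff₀ hD two_pos]
    push_cast
    nlinarith [sq_nonneg (m : ℚ)]
  · have hm' : m ≤ 1 ∨ 5 ≤ m := by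
      simp only [Set.mem_insert_iff, Set.mem_singleton_iff] at hm
      omega
    have key : 2 * (m : ℚ) ^ 2 + m < 2 ^ (m + 1) + 2 := by
      exact_mod_cast two_mul_sq_add_self_lt_two_pow_succ_add_two hm'
    rw [div_lt_div_iff₀ two_pos hD]
    push_cast
    nlinarith
end
end

section
/- Let G be a finite simple graph with no isolated vertex and maximum degree at most 2. Then σ_1(G)/σ_0(G) ≥ 1/3, with equality when G is the path on 2 vertices. -/
open scoped Classical
open Finset

noncomputable section

namespace NI
set_option linter.unusedSectionVars false
variable {V : Type*} [Fintype V]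

theorem edgesIn_eq_zero_iff (G : SimpleGraph V) (S : Finset V) :
    edgesIn G S = 0 ↔ ∀ a ∈ S, ∀ b ∈ S, ¬ G.Adj a b := by
  rw [edgesIn, Finset.card_eq_zero, Finset.filter_eq_empty_iff]
  constructor
  · intro h a ha b hb hab
    refine h (SimpleGraph.mem_edgeFinset.2 ((SimpleGraph.mem_edgeSet G).2 hab)) ?_
    intro v hv
    rcases Sym2.mem_iff.1 hv with rfl | rfl <;> assumption
  · intro h e he hmem
    induction e with
    | h a b =>
      exact h a (hmem a (Sym2.mem_mk_left a b)) b (hmem b (Sym2.mem_mk_right a b))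
        (SimpleGraph.mem_edgeFinset.1 he)

theorem filter_insert_indep (G : SimpleGraph V) {S : Finset V} {v : V}
    (hind : ∀ a ∈ S, ∀ b ∈ S, ¬ G.Adj a b) (hv : v ∉ S) :
    (G.edgeFinset.filter fun e => ∀ x ∈ e, x ∈ insert v S) =
      (S.filter (G.Adj v)).image (fun x => s(v, x)) := by
  ext e
  induction e with
  | h a b =>
    simp only [mem_filter, SimpleGraph.mem_edgeFinset, mem_image, SimpleGraph.mem_edgeSet]
    constructor
    · rintro ⟨hab, hmem⟩
      have ha := hmem a (Sym2.mem_mk_left a b)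
      have hb := hmem b (Sym2.mem_mk_right a b)
      rcases Finset.mem_insert.1 ha with rfl | haS
      · rcases Finset.mem_insert.1 hb with rfl | hbS
        · exact absurd hab (G.irrefl)
        · exact ⟨b, ⟨hbS, hab⟩, rfl⟩
      · rcases Finset.mem_insert.1 hb with rfl | hbS
        · exact ⟨a, ⟨haS, hab.symm⟩, Sym2.eq_swap⟩
        · exact absurd hab (hind a haS b hbS)
    · rintro ⟨x, ⟨hxS, hadj⟩, he⟩
      rcases Sym2.eq_iff.1 he with ⟨rfl, rfl⟩ | ⟨rfl, rfl⟩
      · exact ⟨hadj, fun y hy => by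
          rcases Sym2.mem_iff.1 hy with rfl | rfl
          · exact Finset.mem_insert_self _ _
          · exact Finset.mem_insert_of_mem hxS⟩
      · exact ⟨hadj.symm, fun y hy => by
          rcases Sym2.mem_iff.1 hy with rfl | rfl
          · exact Finset.mem_insert_of_mem hxS
          · exact Finset.mem_insert_self _ _⟩

theorem edgesIn_insert (G : SimpleGraph V) {S : Finset V} {v : V}
    (hind : ∀ a ∈ S, ∀ b ∈ S, ¬ G.Adj a b) (hv : v ∉ S) :
    edgesIn G (insert v S) = (S.filter (G.Adj v)).card := by
  rw [edgesIn, filter_insert_indep G hind hv]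
  exact Finset.card_image_of_injective _ (fun x y h => Sym2.congr_right.1 h)

theorem edgesIn_eq_one (G : SimpleGraph V) {T : Finset V} (h : edgesIn G T = 1) :
    ∃ a b, G.Adj a b ∧ a ∈ T ∧ b ∈ T ∧
      ∀ c d, G.Adj c d → c ∈ T → d ∈ T → s(c, d) = s(a, b) := by
  rw [edgesIn, Finset.card_eq_one] at h
  obtain ⟨e, he⟩ := h
  have hee : e ∈ G.edgeFinset.filter fun e => ∀ v ∈ e, v ∈ T := by rw [he]; exact mem_singleton_self e
  rw [mem_filter] at hee
  induction e with
  | h a b =>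
    refine ⟨a, b, SimpleGraph.mem_edgeFinset.1 hee.1, hee.2 a (Sym2.mem_mk_left a b),
      hee.2 b (Sym2.mem_mk_right a b), ?_⟩
    intro c d hcd hc hd
    have : s(c, d) ∈ G.edgeFinset.filter fun e => ∀ v ∈ e, v ∈ T := by
      rw [mem_filter]
      exact ⟨SimpleGraph.mem_edgeFinset.2 hcd, fun y hy => by
        rcases Sym2.mem_iff.1 hy with rfl | rfl <;> assumption⟩
    rw [he, mem_singleton] at this
    exact this


/-- minimum of a nonempty finset w.r.t. an injection into ℕ -/
def mnS (ι : V → ℕ) (S : Finset V) (h : S.Nonempty) : V :=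
  (Finset.exists_min_image S ι h).choose

theorem mnS_mem (ι : V → ℕ) (S : Finset V) (h : S.Nonempty) : mnS ι S h ∈ S :=
  (Finset.exists_min_image S ι h).choose_spec.1

theorem mnS_min (ι : V → ℕ) (S : Finset V) (h : S.Nonempty) {x : V} (hx : x ∈ S) :
    ι (mnS ι S h) ≤ ι x :=
  (Finset.exists_min_image S ι h).choose_spec.2 x hx

/-- minimum neighbor of `u` (junk `u` if none) -/
def mnbr (ι : V → ℕ) (G : SimpleGraph V) (u : V) : V :=
  if h : (G.neighborFinset u).Nonempty then mnS ι _ h else u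

theorem mnbr_adj (ι : V → ℕ) (G : SimpleGraph V) {u : V} (h : 0 < G.degree u) :
    G.Adj u (mnbr ι G u) := by
  have hne : (G.neighborFinset u).Nonempty := Finset.card_pos.1 h
  rw [mnbr, dif_pos hne]
  exact (SimpleGraph.mem_neighborFinset G u _).1 (mnS_mem ι _ hne)

theorem mnbr_min (ι : V → ℕ) (G : SimpleGraph V) {u x : V} (hx : G.Adj u x) :
    ι (mnbr ι G u) ≤ ι x := by
  have hxm : x ∈ G.neighborFinset u := (SimpleGraph.mem_neighborFinset G u x).2 hx
  have hne : (G.neighborFinset u).Nonempty := ⟨x, hxm⟩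
  rw [mnbr, dif_pos hne]
  exact mnS_min ι _ hne hxm

/-- minimum neighbor of `x` other than `y` (junk `x` if none) -/
def onbr (ι : V → ℕ) (G : SimpleGraph V) (x y : V) : V :=
  if h : ((G.neighborFinset x).erase y).Nonempty then mnS ι _ h else x

theorem onbr_eq (ι : V → ℕ) {G : SimpleGraph V} {x y u : V}
    (h : G.neighborFinset x = {u, y}) (huy : u ≠ y) : onbr ι G x y = u := by
  have he : (G.neighborFinset x).erase y = {u} := by
    rw [h, Finset.pair_comm, Finset.erase_insert (Finset.notMem_singleton.2 (Ne.symm huy))]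
  have hne : ((G.neighborFinset x).erase y).Nonempty := by rw [he]; exact ⟨u, mem_singleton_self u⟩
  have hu2 : ∀ z ∈ (G.neighborFinset x).erase y, z = u := by
    intro z hz; rw [he] at hz; exact Finset.mem_singleton.1 hz
  rw [onbr, dif_pos hne]
  exact hu2 _ (mnS_mem ι _ hne)

/-- The map from independent sets to 1-nearly-independent sets. -/
def fmap (ι : V → ℕ) (G : SimpleGraph V) (x₀ : V) (S : Finset V) : Finset V :=
  if hS : S.Nonempty then
    (if (S.filter (G.Adj (mnbr ι G (mnS ι S hS)))).card = 1
      then insert (mnbr ι G (mnS ι S hS)) S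
      else insert (mnbr ι G (mnS ι S hS)) (S.erase (mnS ι S hS)))
  else insert (mnbr ι G x₀) {x₀}

theorem fmap_edges (ι : V → ℕ) (G : SimpleGraph V) (hiso : ∀ v : V, 0 < G.degree v)
    (hdeg : ∀ v : V, G.degree v ≤ 2) (x₀ : V) {S : Finset V} (hS : edgesIn G S = 0) :
    edgesIn G (fmap ι G x₀ S) = 1 := by
  have hind := (edgesIn_eq_zero_iff G S).1 hS
  rw [fmap]
  by_cases hne : S.Nonempty
  · rw [dif_pos hne]
    set u := mnS ι S hne with hu
    set v := mnbr ι G u with hv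
    have huS : u ∈ S := mnS_mem ι S hne
    have hadj : G.Adj u v := mnbr_adj ι G (hiso u)
    have hvS : v ∉ S := fun hvS => hind u huS v hvS hadj
    have hufil : u ∈ S.filter (G.Adj v) := Finset.mem_filter.2 ⟨huS, hadj.symm⟩
    by_cases hcard : (S.filter (G.Adj v)).card = 1
    · rw [if_pos hcard, edgesIn_insert G hind hvS, hcard]
    · rw [if_neg hcard]
      have hindE : ∀ a ∈ S.erase u, ∀ b ∈ S.erase u, ¬ G.Adj a b := fun a ha b hb =>
        hind a (Finset.mem_of_mem_erase ha) b (Finset.mem_of_mem_erase hb)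
      have hvE : v ∉ S.erase u := fun h => hvS (Finset.mem_of_mem_erase h)
      rw [edgesIn_insert G hindE hvE]
      have hfe : (S.erase u).filter (G.Adj v) = (S.filter (G.Adj v)).erase u :=
        Finset.filter_erase (p := G.Adj v) u S
      rw [hfe, Finset.card_erase_of_mem hufil]
      have hle : (S.filter (G.Adj v)).card ≤ 2 := by
        calc (S.filter (G.Adj v)).card ≤ (G.neighborFinset v).card :=
              Finset.card_le_card (fun x hx => (SimpleGraph.mem_neighborFinset G v x).2
                (Finset.mem_filter.1 hx).2)
          _ ≤ 2 := hdeg v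
      have hge : 1 ≤ (S.filter (G.Adj v)).card := Finset.card_pos.2 ⟨u, hufil⟩
      omega
  · rw [dif_neg hne]
    have hx₀ : G.Adj x₀ (mnbr ι G x₀) := mnbr_adj ι G (hiso x₀)
    have h1 : ∀ a ∈ ({x₀} : Finset V), ∀ b ∈ ({x₀} : Finset V), ¬ G.Adj a b := by
      intro a ha b hb
      rw [Finset.mem_singleton] at ha hb
      subst ha; subst hb; exact G.irrefl
    have h2 : mnbr ι G x₀ ∉ ({x₀} : Finset V) := by
      rw [Finset.mem_singleton]
      exact fun h => G.irrefl (h ▸ hx₀)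
    rw [edgesIn_insert G h1 h2]
    have : ({x₀} : Finset V).filter (G.Adj (mnbr ι G x₀)) = {x₀} := by
      rw [Finset.filter_singleton, if_pos hx₀.symm]
    rw [this, Finset.card_singleton]


theorem fmap_cases (ι : V → ℕ) (G : SimpleGraph V) (hiso : ∀ v : V, 0 < G.degree v)
    (hdeg : ∀ v : V, G.degree v ≤ 2) (x₀ : V) {S T : Finset V}
    (hS0 : edgesIn G S = 0) (hSne : S.Nonempty) (hf : fmap ι G x₀ S = T)
    {a b : V} (hab : G.Adj a b) (haT : a ∈ T) (hbT : b ∈ T)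
    (huniq : ∀ c d, G.Adj c d → c ∈ T → d ∈ T → s(c, d) = s(a, b)) :
    (S = T.erase a ∧ mnbr ι G b = a) ∨ (S = T.erase b ∧ mnbr ι G a = b) ∨
    (S = insert (onbr ι G a b) (T.erase a) ∧ onbr ι G a b ∉ T ∧ G.Adj a (onbr ι G a b) ∧
      onbr ι G a b ≠ b ∧ ∀ z ∈ T.erase a, ι (onbr ι G a b) ≤ ι z) ∨
    (S = insert (onbr ι G b a) (T.erase b) ∧ onbr ι G b a ∉ T ∧ G.Adj b (onbr ι G b a) ∧
      onbr ι G b a ≠ a ∧ ∀ z ∈ T.erase b, ι (onbr ι G b a) ≤ ι z) := by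
  have hind := (edgesIn_eq_zero_iff G S).1 hS0
  rw [fmap, dif_pos hSne] at hf
  set u := mnS ι S hSne with hu
  set v := mnbr ι G u with hv
  have huS : u ∈ S := mnS_mem ι S hSne
  have hadj : G.Adj u v := mnbr_adj ι G (hiso u)
  have hvS : v ∉ S := fun hvS => hind u huS v hvS hadj
  have hufil : u ∈ S.filter (G.Adj v) := Finset.mem_filter.2 ⟨huS, hadj.symm⟩
  by_cases hcard : (S.filter (G.Adj v)).card = 1
  · -- Case A : T = insert v S
    rw [if_pos hcard] at hf
    have hSTe : S = T.erase v := by rw [← hf, Finset.erase_insert hvS]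
    have hvT : v ∈ T := hf ▸ Finset.mem_insert_self v S
    have huT : u ∈ T := hf ▸ Finset.mem_insert_of_mem huS
    have hedge := huniq v u hadj.symm hvT huT
    rw [Sym2.eq_iff] at hedge
    rcases hedge with ⟨hva, hub⟩ | ⟨hvb, hua⟩
    · left
      constructor
      · rw [hSTe, hva]
      · rw [← hub, ← hva, hv, hu]  -- mnbr ι G u = v
    · right; left
      constructor
      · rw [hSTe, hvb]
      · rw [← hua, ← hvb, hv, hu]
  · -- Case B : T = insert v (S.erase u)
    rw [if_neg hcard] at hf
    have hcard2 : (S.filter (G.Adj v)).card = 2 := by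
      have hle : (S.filter (G.Adj v)).card ≤ 2 := by
        calc (S.filter (G.Adj v)).card ≤ (G.neighborFinset v).card :=
              Finset.card_le_card (fun x hx => (SimpleGraph.mem_neighborFinset G v x).2
                (Finset.mem_filter.1 hx).2)
          _ ≤ 2 := hdeg v
      have hge : 1 ≤ (S.filter (G.Adj v)).card := Finset.card_pos.2 ⟨u, hufil⟩
      omega
    -- the other neighbor w
    have hcard1 : ((S.filter (G.Adj v)).erase u).card = 1 := by
      rw [Finset.card_erase_of_mem hufil, hcard2]
    obtain ⟨w, hw⟩ := Finset.card_eq_one.1 hcard1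
    have hwmem : w ∈ (S.filter (G.Adj v)).erase u := hw ▸ Finset.mem_singleton_self w
    have hwu : w ≠ u := (Finset.mem_erase.1 hwmem).1
    have hwS : w ∈ S := (Finset.mem_filter.1 (Finset.mem_of_mem_erase hwmem)).1
    have hwadj : G.Adj v w := (Finset.mem_filter.1 (Finset.mem_of_mem_erase hwmem)).2
    -- N(v) = {u, w}
    have hvE : v ∉ S.erase u := fun h => hvS (Finset.mem_of_mem_erase h)
    have hTe : T.erase v = S.erase u := by rw [← hf, Finset.erase_insert hvE]
    have hSrec : S = insert u (T.erase v) := by rw [hTe, Finset.insert_erase huS]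
    have hvT : v ∈ T := hf ▸ Finset.mem_insert_self v _
    have hwT : w ∈ T := by
      rw [← hf]
      exact Finset.mem_insert_of_mem (Finset.mem_erase.2 ⟨hwu, hwS⟩)
    have huT : u ∉ T := by
      rw [← hf]
      intro h
      rcases Finset.mem_insert.1 h with h1 | h1
      · exact G.irrefl (h1 ▸ hadj)
      · exact (Finset.mem_erase.1 h1).1 rfl
    have hedge := huniq v w hwadj hvT hwT
    rw [Sym2.eq_iff] at hedge
    have huw : u ≠ w := fun h => hwu h.symm
    have hNv : G.neighborFinset v = {u, w} := by
      refine (Finset.eq_of_subset_of_card_le ?_ ?_).symm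
      · intro z hz
        rw [Finset.mem_insert, Finset.mem_singleton] at hz
        rcases hz with rfl | rfl
        · exact (SimpleGraph.mem_neighborFinset G v _).2 hadj.symm
        · exact (SimpleGraph.mem_neighborFinset G v _).2 hwadj
      · rw [Finset.card_pair huw]
        exact hdeg v
    have humin : ∀ z ∈ T.erase v, ι u ≤ ι z := by
      intro z hz
      rw [hTe] at hz
      exact mnS_min ι S hSne (Finset.mem_of_mem_erase hz)
    rcases hedge with ⟨hva, hwb⟩ | ⟨hvb, hwa⟩
    · right; right; left
      have honbr : onbr ι G a b = u := by
        rw [← hva, ← hwb]; exact onbr_eq ι hNv huw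
      rw [honbr]
      exact ⟨by rw [hSrec, hva], huT, by rw [← hva]; exact hadj.symm,
        fun h => by rw [← hwb] at h; exact huw h, by rw [← hva]; exact humin⟩
    · right; right; right
      have honbr : onbr ι G b a = u := by
        rw [← hvb, ← hwa]; exact onbr_eq ι hNv huw
      rw [honbr]
      exact ⟨by rw [hSrec, hvb], huT, by rw [← hvb]; exact hadj.symm,
        fun h => by rw [← hwa] at h; exact huw h, by rw [← hvb]; exact humin⟩


variable (ι : V → ℕ) (G : SimpleGraph V)

/-- If `T.erase b` is in the fiber of `T`, then `b` is the least neighbor of `a`. -/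
theorem caseA_fact (hiso : ∀ v : V, 0 < G.degree v) (hdeg : ∀ v : V, G.degree v ≤ 2)
    (x₀ : V) {T : Finset V} {a b : V} (hab : G.Adj a b) (haT : a ∈ T) (hbT : b ∈ T)
    (huniq : ∀ c d, G.Adj c d → c ∈ T → d ∈ T → s(c, d) = s(a, b))
    (h0 : edgesIn G (T.erase b) = 0) (hf : fmap ι G x₀ (T.erase b) = T) :
    mnbr ι G a = b := by
  have hane : a ∈ T.erase b := Finset.mem_erase.2 ⟨hab.ne, haT⟩
  rcases fmap_cases ι G hiso hdeg x₀ h0 ⟨a, hane⟩ hf hab haT hbT huniq with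
    ⟨h1, _⟩ | ⟨_, h2⟩ | ⟨h1, h2, _⟩ | ⟨h1, h2, _⟩
  · exfalso
    have := h1 ▸ hane
    exact (Finset.mem_erase.1 this).1 rfl
  · exact h2
  · exfalso
    have : onbr ι G a b ∈ T.erase b := h1 ▸ Finset.mem_insert_self _ _
    exact h2 (Finset.mem_of_mem_erase this)
  · exfalso
    have : onbr ι G b a ∈ T.erase b := h1 ▸ Finset.mem_insert_self _ _
    exact h2 (Finset.mem_of_mem_erase this)

theorem conflict (hι : Function.Injective ι) {T : Finset V} {a b : V}
    (hab : G.Adj a b) (hbT : b ∈ T)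
    (hmn : mnbr ι G a = b)
    (h3 : G.Adj a (onbr ι G a b)) (h4 : onbr ι G a b ≠ b)
    (h5 : ∀ z ∈ T.erase a, ι (onbr ι G a b) ≤ ι z) : False := by
  have h6 : ι (mnbr ι G a) ≤ ι (onbr ι G a b) := mnbr_min ι G h3
  rw [hmn] at h6
  have h7 : ι (onbr ι G a b) ≤ ι b := h5 b (Finset.mem_erase.2 ⟨hab.ne', hbT⟩)
  exact h4 (hι (le_antisymm h7 h6))

theorem fiber_le (hι : Function.Injective ι) (hiso : ∀ v : V, 0 < G.degree v)
    (hdeg : ∀ v : V, G.degree v ≤ 2) (x₀ : V) {T : Finset V} (hT : edgesIn G T = 1) :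
    (((Finset.univ.filter fun S => edgesIn G S = 0).filter
        fun S => fmap ι G x₀ S = T)).card ≤ 3 := by
  obtain ⟨a, b, hab, haT, hbT, huniq⟩ := edgesIn_eq_one G hT
  set F := ((Finset.univ.filter fun S : Finset V => edgesIn G S = 0).filter
      fun S => fmap ι G x₀ S = T) with hF
  have hmemF : ∀ S : Finset V, S ∈ F ↔ (edgesIn G S = 0 ∧ fmap ι G x₀ S = T) := by
    intro S
    simp [hF, Finset.mem_filter]
  have huniq' : ∀ c d, G.Adj c d → c ∈ T → d ∈ T → s(c, d) = s(b, a) := by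
    intro c d h1 h2 h3
    rw [huniq c d h1 h2 h3]
    exact Sym2.eq_swap
  -- the two "caseA" facts
  have hAb : T.erase b ∈ F → mnbr ι G a = b := fun h => by
    obtain ⟨h0, hf⟩ := (hmemF _).1 h
    exact caseA_fact ι G hiso hdeg x₀ hab haT hbT huniq h0 hf
  have hAa : T.erase a ∈ F → mnbr ι G b = a := fun h => by
    obtain ⟨h0, hf⟩ := (hmemF _).1 h
    exact caseA_fact ι G hiso hdeg x₀ hab.symm hbT haT huniq' h0 hf
  have key : ∀ S ∈ F, S.Nonempty →
      (S = T.erase a ∧ mnbr ι G b = a) ∨ (S = T.erase b ∧ mnbr ι G a = b) ∨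
      (S = insert (onbr ι G a b) (T.erase a) ∧ onbr ι G a b ∉ T ∧ G.Adj a (onbr ι G a b) ∧
        onbr ι G a b ≠ b ∧ ∀ z ∈ T.erase a, ι (onbr ι G a b) ≤ ι z) ∨
      (S = insert (onbr ι G b a) (T.erase b) ∧ onbr ι G b a ∉ T ∧ G.Adj b (onbr ι G b a) ∧
        onbr ι G b a ≠ a ∧ ∀ z ∈ T.erase b, ι (onbr ι G b a) ≤ ι z) := by
    intro S hS hSne
    obtain ⟨h0, hf⟩ := (hmemF _).1 hS
    exact fmap_cases ι G hiso hdeg x₀ h0 hSne hf hab haT hbT huniq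
  have hcard3 : ∀ p q : Finset V, ({∅, p, q} : Finset (Finset V)).card ≤ 3 := by
    intro p q
    refine (Finset.card_insert_le _ _).trans (Nat.succ_le_succ ?_)
    refine (Finset.card_insert_le _ _).trans (Nat.succ_le_succ ?_)
    simp
  by_cases hb : T.erase b ∈ F <;> by_cases ha : T.erase a ∈ F
  · refine le_trans (Finset.card_le_card (fun S hS => ?_)) (hcard3 (T.erase a) (T.erase b))
    simp only [Finset.mem_insert, Finset.mem_singleton]
    by_cases hSe : S = ∅
    · exact Or.inl hSe
    rcases key S hS (Finset.nonempty_iff_ne_empty.2 hSe) with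
      ⟨h1, _⟩ | ⟨h1, _⟩ | ⟨h1, _, h3, h4, h5⟩ | ⟨h1, _, h3, h4, h5⟩
    · exact Or.inr (Or.inl h1)
    · exact Or.inr (Or.inr h1)
    · exact absurd (conflict ι G hι hab hbT (hAb hb) h3 h4 h5) (by simp)
    · exact absurd (conflict ι G hι hab.symm haT (hAa ha) h3 h4 h5) (by simp)
  · refine le_trans (Finset.card_le_card (fun S hS => ?_))
      (hcard3 (T.erase b) (insert (onbr ι G b a) (T.erase b)))
    simp only [Finset.mem_insert, Finset.mem_singleton]
    by_cases hSe : S = ∅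
    · exact Or.inl hSe
    rcases key S hS (Finset.nonempty_iff_ne_empty.2 hSe) with
      ⟨h1, _⟩ | ⟨h1, _⟩ | ⟨h1, _, h3, h4, h5⟩ | ⟨h1, _, h3, h4, h5⟩
    · exact absurd (h1 ▸ hS) ha
    · exact Or.inr (Or.inl h1)
    · exact absurd (conflict ι G hι hab hbT (hAb hb) h3 h4 h5) (by simp)
    · exact Or.inr (Or.inr h1)
  · refine le_trans (Finset.card_le_card (fun S hS => ?_))
      (hcard3 (T.erase a) (insert (onbr ι G a b) (T.erase a)))
    simp only [Finset.mem_insert, Finset.mem_singleton]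
    by_cases hSe : S = ∅
    · exact Or.inl hSe
    rcases key S hS (Finset.nonempty_iff_ne_empty.2 hSe) with
      ⟨h1, _⟩ | ⟨h1, _⟩ | ⟨h1, _, h3, h4, h5⟩ | ⟨h1, _, h3, h4, h5⟩
    · exact Or.inr (Or.inl h1)
    · exact absurd (h1 ▸ hS) hb
    · exact Or.inr (Or.inr h1)
    · exact absurd (conflict ι G hι hab.symm haT (hAa ha) h3 h4 h5) (by simp)
  · refine le_trans (Finset.card_le_card (fun S hS => ?_))
      (hcard3 (insert (onbr ι G a b) (T.erase a)) (insert (onbr ι G b a) (T.erase b)))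
    simp only [Finset.mem_insert, Finset.mem_singleton]
    by_cases hSe : S = ∅
    · exact Or.inl hSe
    rcases key S hS (Finset.nonempty_iff_ne_empty.2 hSe) with
      ⟨h1, _⟩ | ⟨h1, _⟩ | ⟨h1, _, h3, h4, h5⟩ | ⟨h1, _, h3, h4, h5⟩
    · exact absurd (h1 ▸ hS) ha
    · exact absurd (h1 ▸ hS) hb
    · exact Or.inr (Or.inl h1)
    · exact Or.inr (Or.inr h1)

theorem count_le (hι : Function.Injective ι) (hiso : ∀ v : V, 0 < G.degree v)
    (hdeg : ∀ v : V, G.degree v ≤ 2) (x₀ : V) :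
    (Finset.univ.filter fun S : Finset V => edgesIn G S = 0).card ≤
      3 * (Finset.univ.filter fun S : Finset V => edgesIn G S = 1).card := by
  refine Finset.card_le_mul_card_image_of_maps_to (f := fmap ι G x₀) ?_ 3 ?_
  · intro S hS
    rw [Finset.mem_filter] at hS ⊢
    exact ⟨Finset.mem_univ _, fmap_edges ι G hiso hdeg x₀ hS.2⟩
  · intro T hT
    rw [Finset.mem_filter] at hT
    exact fiber_le ι G hι hiso hdeg x₀ hT.2


end NI

namespace NI

theorem pathGraph2_edgeFinset :
    (SimpleGraph.pathGraph 2).edgeFinset = {s((0 : Fin 2), (1 : Fin 2))} := by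
  ext e
  induction e with
  | h a b =>
    rw [SimpleGraph.mem_edgeFinset, Finset.mem_singleton]
    rw [SimpleGraph.mem_edgeSet, SimpleGraph.pathGraph_adj]
    constructor
    · rintro (h | h)
      · have ha : a = 0 := by omega
        have hb : b = 1 := by omega
        rw [ha, hb]
      · have ha : a = 1 := by omega
        have hb : b = 0 := by omega
        rw [ha, hb]
        exact Sym2.eq_swap
    · intro h
      rcases Sym2.eq_iff.1 h with ⟨rfl, rfl⟩ | ⟨rfl, rfl⟩
      · left; rfl
      · right; rfl

theorem edgesIn_pathGraph2 (S : Finset (Fin 2)) :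
    edgesIn (SimpleGraph.pathGraph 2) S = if (0 : Fin 2) ∈ S ∧ (1 : Fin 2) ∈ S then 1 else 0 := by
  rw [edgesIn, pathGraph2_edgeFinset, Finset.filter_singleton]
  have : (∀ v ∈ s((0 : Fin 2), (1 : Fin 2)), v ∈ S) ↔ ((0 : Fin 2) ∈ S ∧ (1 : Fin 2) ∈ S) := by
    constructor
    · intro h
      exact ⟨h 0 (Sym2.mem_mk_left _ _), h 1 (Sym2.mem_mk_right _ _)⟩
    · rintro ⟨h0, h1⟩ v hv
      rcases Sym2.mem_iff.1 hv with rfl | rfl <;> assumption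
  by_cases h : (0 : Fin 2) ∈ S ∧ (1 : Fin 2) ∈ S
  · rw [if_pos h, if_pos (this.2 h), Finset.card_singleton]
  · rw [if_neg h, if_neg (fun hh => h (this.1 hh)), Finset.card_empty]

theorem sigma1_pathGraph2 : sigmaNI (SimpleGraph.pathGraph 2) 1 = 1 := by
  rw [sigmaNI, nearlyIndep]
  have : (Finset.univ.filter fun S : Finset (Fin 2) => edgesIn (SimpleGraph.pathGraph 2) S = 1) =
      {(Finset.univ : Finset (Fin 2))} := by
    ext S
    rw [Finset.mem_filter, Finset.mem_singleton, edgesIn_pathGraph2]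
    constructor
    · rintro ⟨-, h⟩
      by_cases hc : (0 : Fin 2) ∈ S ∧ (1 : Fin 2) ∈ S
      · apply Finset.eq_univ_iff_forall.2
        intro x
        rcases Fin.exists_fin_two.1 ⟨x, rfl⟩ with rfl | rfl
        · exact hc.1
        · exact hc.2
      · rw [if_neg hc] at h; exact absurd h (by norm_num)
    · rintro rfl
      refine ⟨Finset.mem_univ _, ?_⟩
      rw [if_pos ⟨Finset.mem_univ _, Finset.mem_univ _⟩]
  rw [this, Finset.card_singleton]

theorem sigma0_pathGraph2 : sigmaNI (SimpleGraph.pathGraph 2) 0 = 3 := by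
  have hsplit := Finset.card_filter_add_card_filter_not
    (s := (Finset.univ : Finset (Finset (Fin 2))))
    (p := fun S => edgesIn (SimpleGraph.pathGraph 2) S = 1)
  have huniv : (Finset.univ : Finset (Finset (Fin 2))).card = 4 := by
    rw [Finset.card_univ, Fintype.card_finset, Fintype.card_fin]; norm_num
  have hneg : (Finset.univ.filter fun S : Finset (Fin 2) =>
      ¬ edgesIn (SimpleGraph.pathGraph 2) S = 1) = nearlyIndep (SimpleGraph.pathGraph 2) 0 := by
    rw [nearlyIndep]
    apply Finset.filter_congr
    intro S _
    rw [edgesIn_pathGraph2]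
    by_cases h : (0 : Fin 2) ∈ S ∧ (1 : Fin 2) ∈ S <;> simp [h]
  have h1 : sigmaNI (SimpleGraph.pathGraph 2) 1 = 1 := sigma1_pathGraph2
  rw [sigmaNI, nearlyIndep] at h1
  rw [sigmaNI, ← hneg]
  omega


end NI

theorem stmt19 {V : Type*} [Fintype V] [Nonempty V] (G : SimpleGraph V)
    (hiso : ∀ v : V, 0 < G.degree v) (hdeg : ∀ v : V, G.degree v ≤ 2) :
    (1 : ℚ) / 3 ≤ (sigmaNI G 1 : ℚ) / sigmaNI G 0 ∧
    (sigmaNI (SimpleGraph.pathGraph 2) 1 : ℚ) / sigmaNI (SimpleGraph.pathGraph 2) 0 =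
      1 / 3 := by
  constructor
  · -- main inequality
    set ι : V → ℕ := fun v => ((Fintype.equivFin V) v).val with hι
    have hιinj : Function.Injective ι := fun x y h =>
      (Fintype.equivFin V).injective (Fin.val_injective h)
    have hcount := NI.count_le ι G hιinj hiso hdeg (Classical.arbitrary V)
    have h0 : sigmaNI G 0 = (Finset.univ.filter fun S : Finset V => edgesIn G S = 0).card := rfl
    have h1 : sigmaNI G 1 = (Finset.univ.filter fun S : Finset V => edgesIn G S = 1).card := rfl
    have hcount' : sigmaNI G 0 ≤ 3 * sigmaNI G 1 := by rw [h0, h1]; exact hcount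
    have hpos : 0 < sigmaNI G 0 := by
      rw [sigmaNI]
      refine Finset.card_pos.2 ⟨∅, ?_⟩
      rw [nearlyIndep, Finset.mem_filter]
      refine ⟨Finset.mem_univ _, ?_⟩
      rw [NI.edgesIn_eq_zero_iff]
      intro a ha
      exact absurd ha (Finset.notMem_empty a)
    have hposQ : (0 : ℚ) < (sigmaNI G 0 : ℚ) := by exact_mod_cast hpos
    rw [div_le_div_iff₀ (by norm_num) hposQ]
    have : (sigmaNI G 0 : ℚ) ≤ 3 * (sigmaNI G 1 : ℚ) := by exact_mod_cast hcount'
    linarith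
  · rw [NI.sigma1_pathGraph2, NI.sigma0_pathGraph2]
    norm_num
end
end
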